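/- arXiv:2008.09565 — 12 statements merged into one kernel-verified Lean document; each statement's English description precedes it below -/
import Mathlib

section
/- Let K be a field, G a finite set of monomials of positive degree in K[x_1,…,x_n], φ_G : S = K[T_m : m ∈ G] → K[x_1,…,x_n] the K-algebra map with φ_G(T_m) = m, and J = ker(φ_G). Let B be a set of binomials contained in J. Then B generates the ideal J if and only if for every monomial μ of K[x_1,…,x_n] the fiber graph Γ_{μ,B} is either empty or connected. -/
open MvPolynomial

/-- The edge relation of the fiber graph: two exponent vectors `γ`, `γ'` of monomials
`T^γ`, `T^{γ'}` of `S` are related if there are a binomial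
`A − A' = T^a − T^{a'} ∈ B` and a monomial `T^u` with `{T^γ, T^{γ'}} = {T^u·A, T^u·A'}`. -/
def fiberAdj (K : Type*) [Field K] (σ : Type*) (B : Set (MvPolynomial σ K))
    (γ γ' : σ →₀ ℕ) : Prop :=
  γ ≠ γ' ∧ ∃ a a' u : σ →₀ ℕ,
    (MvPolynomial.monomial a (1 : K) - MvPolynomial.monomial a' (1 : K)) ∈ B ∧
    ((γ = u + a ∧ γ' = u + a') ∨ (γ = u + a' ∧ γ' = u + a))

/-!
Write `φ(T^γ) = x^{F γ}`. Choosing a representative `g γ` in each fiber of `F`, every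
`p ∈ ker φ` is `∑ c_γ (T^γ - T^{g γ})`, since `∑ c_γ T^{g γ}` only depends on `φ p = 0`; so
`ker φ` is spanned by binomials inside single fibers, and these lie in `span B` when the fiber
graphs are connected, by telescoping along paths.

Conversely, "joined by a path of a fiber graph" is an additive congruence `c` on exponents,
because edges are stable under translation. Every element of `B` maps to zero in the monoid
algebra over the quotient by `c`, hence so does `span B`, and `T^x - T^y` maps to zero there
only when `x` and `y` are joined by a path.
-/

namespace MvPolynomial

variable {R σ ι : Type*} [CommRing R]

def binomials (r : (σ →₀ ℕ) → (σ →₀ ℕ) → Prop) : Set (MvPolynomial σ R) :=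
  {p | ∃ x y, r x y ∧ p = monomial x 1 - monomial y 1}

theorem aeval_monomial_monomial (w : ι → (σ →₀ ℕ)) (γ : ι →₀ ℕ) (c : R) :
    aeval (fun t => monomial (w t) (1 : R)) (monomial γ c) =
      monomial (Finsupp.linearCombination ℕ w γ) c := by
  rw [aeval_monomial, Finsupp.linearCombination_apply, monomial_finsupp_sum_index, algebraMap_eq]
  exact congrArg _ (Finsupp.prod_congr fun t _ => by rw [monomial_pow, one_pow])

theorem ker_le_span_binomials {F : (σ →₀ ℕ) → (ι →₀ ℕ)}
    {Φ : MvPolynomial σ R →ₗ[R] MvPolynomial ι R}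
    (hΦ : ∀ γ c, Φ (monomial γ c) = monomial (F γ) c) :
    LinearMap.ker Φ ≤ Submodule.span R (binomials fun x y => F x = F y) := by
  intro p hp
  set g := Function.invFun F ∘ F
  have hrep : ∑ γ ∈ p.support, monomial (g γ) (coeff γ p) = 0 := by
    have h := congrArg (AddMonoidAlgebra.mapDomainLinearMap R R (Function.invFun F)) hp
    rw [p.as_sum, map_sum, map_sum, map_zero] at h
    simp_rw [hΦ, ← single_eq_monomial, AddMonoidAlgebra.mapDomainLinearMap_single] at h
    exact h
  have hp : p = ∑ γ ∈ p.support, coeff γ p • (monomial γ (1 : R) - monomial (g γ) 1) := by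
    simp only [smul_sub, smul_monomial, smul_eq_mul, mul_one, Finset.sum_sub_distrib, hrep,
      sub_zero]
    exact p.as_sum
  rw [hp]
  exact Submodule.sum_mem _ fun γ _ => Submodule.smul_mem _ _ <|
    Submodule.subset_span ⟨γ, g γ, (Function.invFun_eq ⟨γ, rfl⟩).symm, rfl⟩

theorem monomial_sub_monomial_mem_ker_mapDomain_iff [Nontrivial R] (c : AddCon (σ →₀ ℕ))
    {x y : σ →₀ ℕ} :
    monomial x (1 : R) - monomial y 1 ∈ RingHom.ker (AddMonoidAlgebra.mapDomainRingHom R c.mk') ↔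
      c x y := by
  rw [RingHom.mem_ker, map_sub, sub_eq_zero, ← single_eq_monomial, ← single_eq_monomial,
    AddMonoidAlgebra.mapDomainRingHom_apply, AddMonoidAlgebra.mapDomainRingHom_apply,
    AddMonoidAlgebra.mapDomain_single, AddMonoidAlgebra.mapDomain_single,
    AddMonoidAlgebra.single_left_inj one_ne_zero, AddCon.coe_mk', c.eq]

end MvPolynomial

theorem SimpleGraph.reachable_fromRel_subtype_iff {α : Type*} {r : α → α → Prop} [Std.Symm r]
    {p : α → Prop} (hp : ∀ a b, r a b → p a → p b) {x y : Subtype p} :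
    (SimpleGraph.fromRel fun a b : Subtype p => r a b).Reachable x y ↔
      Relation.ReflTransGen r x y := by
  rw [SimpleGraph.reachable_iff_reflTransGen]
  constructor
  · refine fun h => h.lift Subtype.val fun a b hab => ?_
    obtain ⟨-, h | h⟩ := (SimpleGraph.fromRel_adj _ _ _).1 hab
    exacts [h, Std.Symm.symm _ _ h]
  · obtain ⟨a, ha⟩ := x
    intro (h : Relation.ReflTransGen r a y)
    induction h using Relation.ReflTransGen.head_induction_on with
    | refl => rfl
    | @head a c hac _ ih =>
      have hc := hp a c hac ha
      by_cases hne : a = c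
      · subst hne; exact ih hc
      · exact .head ((SimpleGraph.fromRel_adj _ _ _).2 ⟨fun h => hne (congrArg Subtype.val h),
          Or.inl hac⟩) (ih hc)

section FiberGraph

variable {K σ : Type*} [Field K] {B : Set (MvPolynomial σ K)}

instance : Std.Symm (fiberAdj K σ B) where
  symm _ _ := fun ⟨hne, a, a', u, hb, h⟩ =>
    ⟨hne.symm, a, a', u, hb, (h.imp And.symm And.symm).symm⟩

theorem fiberAdj.add_left {γ γ' : σ →₀ ℕ} (u : σ →₀ ℕ) (h : fiberAdj K σ B γ γ') :
    fiberAdj K σ B (u + γ) (u + γ') := by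
  obtain ⟨hne, a, a', v, hb, h⟩ := h
  refine ⟨fun he => hne (add_left_cancel he), a, a', u + v, hb, ?_⟩
  rcases h with ⟨rfl, rfl⟩ | ⟨rfl, rfl⟩
  · exact Or.inl ⟨(add_assoc u v a).symm, (add_assoc u v a').symm⟩
  · exact Or.inr ⟨(add_assoc u v a').symm, (add_assoc u v a).symm⟩

theorem fiberAdj.monomial_sub_mem_span {γ γ' : σ →₀ ℕ} (h : fiberAdj K σ B γ γ') :
    monomial γ (1 : K) - monomial γ' 1 ∈ Ideal.span B := by
  obtain ⟨-, a, a', u, hb, h⟩ := h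
  have hmem := Ideal.mul_mem_left _ (monomial u (1 : K)) (Ideal.subset_span hb)
  rw [mul_sub, monomial_mul, monomial_mul, one_mul] at hmem
  rcases h with ⟨rfl, rfl⟩ | ⟨rfl, rfl⟩
  · exact hmem
  · simpa only [neg_sub] using neg_mem hmem

theorem monomial_sub_mem_span_of_reflTransGen {γ γ' : σ →₀ ℕ}
    (h : Relation.ReflTransGen (fiberAdj K σ B) γ γ') :
    monomial γ (1 : K) - monomial γ' 1 ∈ Ideal.span B := by
  induction h with
  | refl => simp
  | tail _ hbc ih => simpa only [sub_add_sub_cancel] using add_mem ih hbc.monomial_sub_mem_span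

variable (K B) in
def fiberCon : AddCon (σ →₀ ℕ) where
  r := Relation.ReflTransGen (fiberAdj K σ B)
  iseqv := ⟨fun _ => .refl, Std.Symm.symm _ _, .trans⟩
  add' {a b c d} hab hcd :=
    ((hab.lift (· + c) fun _ _ h => by simpa only [add_comm _ c] using h.add_left c).trans
      (hcd.lift (b + ·) fun _ _ h => h.add_left b))

theorem span_le_ker_fiberCon
    (hB : ∀ b ∈ B, ∃ a a' : σ →₀ ℕ, a ≠ a' ∧ b = monomial a (1 : K) - monomial a' 1) :
    Ideal.span B ≤ RingHom.ker (AddMonoidAlgebra.mapDomainRingHom K (fiberCon K B).mk') := by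
  refine Ideal.span_le.2 fun b hb => ?_
  obtain ⟨a, a', hne, rfl⟩ := hB b hb
  refine (monomial_sub_monomial_mem_ker_mapDomain_iff _).2 (.single ⟨hne, a, a', 0, hb, ?_⟩)
  simp only [zero_add, and_self, true_or]

end FiberGraph

theorem binomials_generate_iff_fibers_connected_general
    (K : Type*) [Field K] {n : ℕ}
    (G : Finset (Fin n →₀ ℕ))
    (φ : MvPolynomial {m // m ∈ G} K →ₐ[K] MvPolynomial (Fin n) K)
    (hφ : φ = MvPolynomial.aeval fun m : {m // m ∈ G} => MvPolynomial.monomial m.1 (1 : K))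
    (B : Set (MvPolynomial {m // m ∈ G} K))
    (hBJ : ∀ b ∈ B, φ b = 0)
    (hBbin : ∀ b ∈ B, ∃ a a' : {m // m ∈ G} →₀ ℕ, a ≠ a' ∧
      b = MvPolynomial.monomial a (1 : K) - MvPolynomial.monomial a' (1 : K)) :
    Ideal.span B = RingHom.ker φ ↔
      ∀ μ : Fin n →₀ ℕ,
        IsEmpty {γ : {m // m ∈ G} →₀ ℕ //
            φ (MvPolynomial.monomial γ (1 : K)) = MvPolynomial.monomial μ (1 : K)} ∨
        (SimpleGraph.fromRel fun γ γ' : {γ : {m // m ∈ G} →₀ ℕ //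
            φ (MvPolynomial.monomial γ (1 : K)) = MvPolynomial.monomial μ (1 : K)} =>
              fiberAdj K _ B γ.1 γ'.1).Connected := by
  have hφ_monomial (γ) (c : K) : φ (monomial γ c) =
      monomial (Finsupp.linearCombination ℕ (fun m : {m // m ∈ G} => m.1) γ) c :=
    hφ ▸ aeval_monomial_monomial _ γ c
  have hspan_le : Ideal.span B ≤ RingHom.ker φ := Ideal.span_le.2 hBJ
  have hfiber (μ : Fin n →₀ ℕ) (a b) (h : fiberAdj K _ B a b)
      (ha : φ (monomial a 1) = monomial μ 1) : φ (monomial b 1) = monomial μ 1 := by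
    rw [← ha, eq_comm, ← sub_eq_zero, ← map_sub]
    exact hspan_le h.monomial_sub_mem_span
  constructor
  · intro hspan μ
    refine (isEmpty_or_nonempty _).imp_right fun hnonempty =>
      (SimpleGraph.connected_iff _).2 ⟨fun x y => ?_, hnonempty⟩
    rw [SimpleGraph.reachable_fromRel_subtype_iff (hfiber μ)]
    have hxy : monomial x.1 (1 : K) - monomial y.1 1 ∈ Ideal.span B := by
      rw [hspan, RingHom.mem_ker, map_sub, x.2, y.2, sub_self]
    exact (monomial_sub_monomial_mem_ker_mapDomain_iff _).1 (span_le_ker_fiberCon hBbin hxy)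
  · refine fun hconn => le_antisymm hspan_le fun p hp => ?_
    refine Submodule.span_le (p := (Ideal.span B).restrictScalars K) |>.2 ?_
      (ker_le_span_binomials (Φ := φ.toLinearMap) hφ_monomial hp)
    rintro _ ⟨x, y, hxy, rfl⟩
    have hx := hφ_monomial x 1
    have hy := hxy ▸ hφ_monomial y 1
    obtain hempty | hconn := hconn _
    · exact hempty.elim ⟨x, hx⟩
    · exact monomial_sub_mem_span_of_reflTransGen <|
        (SimpleGraph.reachable_fromRel_subtype_iff (hfiber _)).1
          (hconn.preconnected ⟨x, hx⟩ ⟨y, hy⟩)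

/-- Proposition 2.5 (generation): for the toric map `φ_G : K[T_m : m ∈ G] → K[x]`,
`φ_G(T_m) = m`, a set `B` of binomials contained in `J = ker φ_G` generates `J`
iff for every monomial `μ` of `K[x]` the fiber graph `Γ_{μ,B}` (with vertex set the
monomials of the fiber of `φ_G` over `μ`) is empty or connected. -/
theorem binomials_generate_iff_fibers_connected
    (K : Type*) [Field K] {n : ℕ}
    (G : Finset (Fin n →₀ ℕ)) (hG : ∀ m ∈ G, m ≠ 0)
    (φ : MvPolynomial {m // m ∈ G} K →ₐ[K] MvPolynomial (Fin n) K)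
    (hφ : φ = MvPolynomial.aeval fun m : {m // m ∈ G} => MvPolynomial.monomial m.1 (1 : K))
    (B : Set (MvPolynomial {m // m ∈ G} K))
    (hBJ : ∀ b ∈ B, φ b = 0)
    (hBbin : ∀ b ∈ B, ∃ a a' : {m // m ∈ G} →₀ ℕ, a ≠ a' ∧
      b = MvPolynomial.monomial a (1 : K) - MvPolynomial.monomial a' (1 : K)) :
    Ideal.span B = RingHom.ker φ ↔
      ∀ μ : Fin n →₀ ℕ,
        IsEmpty {γ : {m // m ∈ G} →₀ ℕ //
            φ (MvPolynomial.monomial γ (1 : K)) = MvPolynomial.monomial μ (1 : K)} ∨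
        (SimpleGraph.fromRel fun γ γ' : {γ : {m // m ∈ G} →₀ ℕ //
            φ (MvPolynomial.monomial γ (1 : K)) = MvPolynomial.monomial μ (1 : K)} =>
              fiberAdj K _ B γ.1 γ'.1).Connected :=
  binomials_generate_iff_fibers_connected_general K G φ hφ B hBJ hBbin
end

section
/- Let K be a field, G a finite set of monomials of positive degree in K[x_1,…,x_n], φ_G : S = K[T_m : m ∈ G] → K[x_1,…,x_n] the K-algebra map with φ_G(T_m) = m, and J = ker(φ_G). Let B be a set of binomials contained in J and ≺ a monomial order on S. Then B is a Gröbner basis of J with respect to ≺ (i.e., for every nonzero f ∈ J the ≺-leading monomial of f is divisible by the ≺-leading monomial of some element of B) if and only if for every monomial μ of K[x_1,…,x_n] the directed fiber graph Γ⃗_{μ,B} is either empty or has a unique sink. -/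
open MvPolynomial

section ToricAux

variable {K : Type*} [Field K] {n : ℕ} {G : Finset (Fin n →₀ ℕ)}

/-- The exponent map sending `γ` to the exponent of `φ_G(T^γ)`. -/
noncomputable def toricPi (γ : {m // m ∈ G} →₀ ℕ) : Fin n →₀ ℕ :=
  γ.sum fun m k => k • m.1

lemma toricPi_add (γ γ' : {m // m ∈ G} →₀ ℕ) :
    toricPi (γ + γ') = toricPi γ + toricPi γ' :=
  Finsupp.sum_add_index' (fun m => zero_smul ℕ m.1) (fun m b c => add_smul b c m.1)

lemma aeval_mono (γ : {m // m ∈ G} →₀ ℕ) (c : K) :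
    MvPolynomial.aeval (fun m : {m // m ∈ G} => MvPolynomial.monomial m.1 (1 : K))
      (MvPolynomial.monomial γ c) = MvPolynomial.monomial (toricPi γ) c := by
  rw [aeval_monomial, toricPi, monomial_finsupp_sum_index]
  simp [monomial_pow, algebraMap_eq]

lemma mono_one_inj {α : Type*} {u v : α →₀ ℕ} :
    (MvPolynomial.monomial u (1 : K) : MvPolynomial α K) = MvPolynomial.monomial v 1 ↔ u = v := by
  rw [monomial_eq_monomial_iff]
  simp

/-- The degree additive map on exponents. -/
noncomputable def toricWt : (Fin n →₀ ℕ) →+ ℕ :=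
  Finsupp.liftAddHom fun _ => AddMonoidHom.id ℕ

lemma toricWt_apply (v : Fin n →₀ ℕ) : toricWt v = v.sum fun _ k => k := by
  rw [toricWt, Finsupp.liftAddHom_apply]
  rfl

lemma toricWt_pos {v : Fin n →₀ ℕ} (hv : v ≠ 0) : 1 ≤ toricWt v := by
  have : ∃ i, v i ≠ 0 := by
    by_contra h
    push_neg at h
    exact hv (Finsupp.ext h)
  obtain ⟨i, hi⟩ := this
  have hmem : i ∈ v.support := Finsupp.mem_support_iff.mpr hi
  calc 1 ≤ v i := Nat.one_le_iff_ne_zero.mpr hi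
    _ ≤ v.support.sum fun j => v j :=
      Finset.single_le_sum (fun j _ => Nat.zero_le _) hmem
    _ = toricWt v := (toricWt_apply v).symm

lemma le_wt_of_pi (hG : ∀ m ∈ G, m ≠ 0) (γ : {m // m ∈ G} →₀ ℕ) (m₀ : {m // m ∈ G}) :
    γ m₀ ≤ toricWt (toricPi γ) := by
  classical
  have h1 : toricWt (toricPi γ) = γ.sum fun m k => k * toricWt m.1 := by
    rw [toricPi, map_finsuppSum]
    refine Finsupp.sum_congr fun m _ => ?_
    rw [map_nsmul, smul_eq_mul]
  by_cases hmem : m₀ ∈ γ.support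
  · calc γ m₀ ≤ γ m₀ * toricWt m₀.1 :=
        Nat.le_mul_of_pos_right _ (toricWt_pos (hG m₀.1 m₀.2))
    _ ≤ γ.sum fun m k => k * toricWt m.1 :=
        Finset.single_le_sum (f := fun m => γ m * toricWt m.1) (fun j _ => Nat.zero_le _) hmem
    _ = toricWt (toricPi γ) := h1.symm
  · rw [Finsupp.notMem_support_iff.mp hmem]
    exact Nat.zero_le _

lemma fiber_finite (hG : ∀ m ∈ G, m ≠ 0) (μ : Fin n →₀ ℕ) :
    {γ : {m // m ∈ G} →₀ ℕ | toricPi γ = μ}.Finite := by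
  classical
  have hsub : {γ : {m // m ∈ G} →₀ ℕ | toricPi γ = μ} ⊆
      Set.Iic (Finsupp.equivFunOnFinite.symm fun _ => toricWt μ) := by
    intro γ hγ
    rw [Set.mem_Iic, Finsupp.le_def]
    intro m
    have := le_wt_of_pi hG γ m
    rw [hγ] at this
    simpa using this
  exact (Set.finite_Iic _).subset hsub

lemma exists_other (f : MvPolynomial {m // m ∈ G} K)
    (hf : MvPolynomial.aeval (fun m : {m // m ∈ G} => MvPolynomial.monomial m.1 (1 : K)) f = 0)
    (lf : {m // m ∈ G} →₀ ℕ) (hlf : lf ∈ f.support) :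
    ∃ γ ∈ f.support, γ ≠ lf ∧ toricPi γ = toricPi lf := by
  classical
  by_contra h
  push_neg at h
  have h0 : MvPolynomial.coeff (toricPi lf)
      (MvPolynomial.aeval (fun m : {m // m ∈ G} => MvPolynomial.monomial m.1 (1 : K)) f) = 0 := by
    rw [hf, coeff_zero]
  rw [f.as_sum, map_sum, MvPolynomial.coeff_sum] at h0
  have h1 : ∀ γ ∈ f.support,
      MvPolynomial.coeff (toricPi lf)
        (MvPolynomial.aeval (fun m : {m // m ∈ G} => MvPolynomial.monomial m.1 (1 : K))
          (MvPolynomial.monomial γ (MvPolynomial.coeff γ f)))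
        = if γ = lf then MvPolynomial.coeff lf f else 0 := by
    intro γ hγ
    rw [aeval_mono, coeff_monomial]
    by_cases hγl : γ = lf
    · subst hγl; simp
    · rw [if_neg (h γ hγ hγl), if_neg hγl]
  rw [Finset.sum_congr rfl h1, Finset.sum_ite_eq' f.support lf, if_pos hlf] at h0
  exact (MvPolynomial.mem_support_iff.mp hlf) h0

open scoped Classical in
lemma binom_coeff {α : Type*} (a a' c : α →₀ ℕ) :
    MvPolynomial.coeff c (MvPolynomial.monomial a (1 : K) - MvPolynomial.monomial a' 1)
      = (if a = c then (1 : K) else 0) - (if a' = c then 1 else 0) := by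
  rw [coeff_sub, coeff_monomial, coeff_monomial]

end ToricAux

section OrdAux

lemma exists_ord_min {α : Type*} [L : LinearOrder α] {s : Set α} (hfin : s.Finite)
    (hne : s.Nonempty) : ∃ a ∈ s, ∀ b ∈ s, ¬ b < a := by
  obtain ⟨a, ha, h⟩ := hfin.toFinset.exists_min_image id (by simpa using hne)
  exact ⟨a, by simpa using ha, fun b hb => not_lt_of_ge (h b (by simpa using hb))⟩

lemma exists_ord_max {α : Type*} [L : LinearOrder α] (s : Finset α) (h : s.Nonempty) :
    ∃ a ∈ s, ∀ b ∈ s, b ≠ a → b < a := by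
  obtain ⟨a, ha, hmax⟩ := s.exists_max_image id h
  exact ⟨a, ha, fun b hb hne => lt_of_le_of_ne (hmax b hb) hne⟩

lemma ord_irrefl {α : Type*} [L : LinearOrder α] (a : α) (h : a < a) : False :=
  lt_irrefl a h

lemma ord_add_cancel {α : Type*} [L : LinearOrder α] [AddCommMonoid α]
    (hadd : ∀ a b c : α, a < b → a + c < b + c) {u a b : α} (h : u + a < u + b) : a < b := by
  rcases lt_trichotomy a b with h1 | rfl | h1
  · exact h1
  · exact absurd h (lt_irrefl _)
  · have h2 := hadd b a u h1
    rw [add_comm b u, add_comm a u] at h2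
    exact absurd h (lt_asymm h2)

end OrdAux

/-- Proposition 2.5 (Gröbner bases): for the toric map `φ_G : K[T_m : m ∈ G] → K[x]`,
`φ_G(T_m) = m`, a set `B` of binomials contained in `J = ker φ_G`, and a monomial order
`ord` on the monomials of `S = K[T_m : m ∈ G]` (a linear order compatible with addition
for which `1 = T^0` is the least monomial), `B` is a Gröbner basis of `J` w.r.t. `ord`
(every nonzero `f ∈ J` has its leading monomial divisible by the leading monomial of
some element of `B`) iff for every monomial `μ` of `K[x]` the directed fiber graph
`Γ⃗_{μ,B}` (edges directed from the `ord`-larger to the `ord`-smaller endpoint) is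
empty or has a unique sink. -/
theorem groebner_iff_fibers_unique_sink
    (K : Type*) [Field K] {n : ℕ}
    (G : Finset (Fin n →₀ ℕ)) (hG : ∀ m ∈ G, m ≠ 0)
    (φ : MvPolynomial {m // m ∈ G} K →ₐ[K] MvPolynomial (Fin n) K)
    (hφ : φ = MvPolynomial.aeval fun m : {m // m ∈ G} => MvPolynomial.monomial m.1 (1 : K))
    (B : Set (MvPolynomial {m // m ∈ G} K))
    (hBJ : ∀ b ∈ B, φ b = 0)
    (hBbin : ∀ b ∈ B, ∃ a a' : {m // m ∈ G} →₀ ℕ, a ≠ a' ∧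
      b = MvPolynomial.monomial a (1 : K) - MvPolynomial.monomial a' (1 : K))
    (ord : LinearOrder ({m // m ∈ G} →₀ ℕ))
    (hord_add : ∀ a b c : {m // m ∈ G} →₀ ℕ, ord.lt a b → ord.lt (a + c) (b + c))
    (hord_zero : ∀ a : {m // m ∈ G} →₀ ℕ, a ≠ 0 → ord.lt 0 a) :
    (∀ f : MvPolynomial {m // m ∈ G} K, φ f = 0 → f ≠ 0 →
      ∃ lf ∈ f.support, (∀ a ∈ f.support, a ≠ lf → ord.lt a lf) ∧
        ∃ b ∈ B, ∃ lb ∈ b.support, (∀ c ∈ b.support, c ≠ lb → ord.lt c lb) ∧ lb ≤ lf) ↔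
      ∀ μ : Fin n →₀ ℕ,
        IsEmpty {γ : {m // m ∈ G} →₀ ℕ //
            φ (MvPolynomial.monomial γ (1 : K)) = MvPolynomial.monomial μ (1 : K)} ∨
        ∃! γ : {γ : {m // m ∈ G} →₀ ℕ //
            φ (MvPolynomial.monomial γ (1 : K)) = MvPolynomial.monomial μ (1 : K)},
          ∀ γ' : {γ : {m // m ∈ G} →₀ ℕ //
              φ (MvPolynomial.monomial γ (1 : K)) = MvPolynomial.monomial μ (1 : K)},
            fiberAdj K _ B γ.1 γ'.1 → ¬ ord.lt γ'.1 γ.1 := by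
  classical
  subst hφ
  have hfib : ∀ (μ : Fin n →₀ ℕ) (γ : {m // m ∈ G} →₀ ℕ),
      MvPolynomial.aeval (fun m : {m // m ∈ G} => MvPolynomial.monomial m.1 (1 : K))
        (MvPolynomial.monomial γ (1 : K)) = MvPolynomial.monomial μ (1 : K)
        ↔ toricPi γ = μ := by
    intro μ γ
    rw [aeval_mono]
    exact mono_one_inj
  constructor
  · -- Gröbner basis ⇒ unique sinks
    intro hGB μ
    by_cases hne : Nonempty {γ : {m // m ∈ G} →₀ ℕ //
        MvPolynomial.aeval (fun m : {m // m ∈ G} => MvPolynomial.monomial m.1 (1 : K))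
          (MvPolynomial.monomial γ (1 : K)) = MvPolynomial.monomial μ (1 : K)}
    swap
    · exact Or.inl (not_nonempty_iff.mp hne)
    right
    obtain ⟨⟨γw, hγw⟩⟩ := hne
    obtain ⟨γ₀, hγ₀s, hγ₀min⟩ :=
      exists_ord_min (L := ord) (fiber_finite hG μ) ⟨γw, (hfib μ γw).mp hγw⟩
    refine ⟨⟨γ₀, (hfib μ γ₀).mpr hγ₀s⟩,
      fun γ' _ => hγ₀min γ'.1 ((hfib μ γ'.1).mp γ'.2), ?_⟩
    rintro ⟨γ, hγ⟩ hsink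
    have hγs : toricPi γ = μ := (hfib μ γ).mp hγ
    by_contra hne2
    have hne3 : γ ≠ γ₀ := fun h => hne2 (Subtype.ext h)
    set f : MvPolynomial {m // m ∈ G} K :=
      MvPolynomial.monomial γ (1 : K) - MvPolynomial.monomial γ₀ 1 with hfdef
    have hφf : MvPolynomial.aeval
        (fun m : {m // m ∈ G} => MvPolynomial.monomial m.1 (1 : K)) f = 0 := by
      rw [hfdef, map_sub, aeval_mono, aeval_mono, hγs, hγ₀s, sub_self]
    have hγmem : γ ∈ f.support := by
      rw [MvPolynomial.mem_support_iff, hfdef, binom_coeff, if_pos rfl,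
        if_neg (Ne.symm hne3), sub_zero]
      exact one_ne_zero
    have hγ₀mem : γ₀ ∈ f.support := by
      rw [MvPolynomial.mem_support_iff, hfdef, binom_coeff, if_neg hne3, if_pos rfl, zero_sub]
      exact neg_ne_zero.mpr one_ne_zero
    have hf0 : f ≠ 0 := fun h => by
      rw [h] at hγmem; simp at hγmem
    obtain ⟨lf, hlfmem, hlfmax, b, hbB, lb, hlbmem, hlbmax, hle⟩ := hGB f hφf hf0
    have hsupp : ∀ c ∈ f.support, c = γ ∨ c = γ₀ := by
      intro c hc
      by_contra hcc
      push_neg at hcc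
      apply MvPolynomial.mem_support_iff.mp hc
      rw [hfdef, binom_coeff, if_neg (fun h => hcc.1 h.symm),
        if_neg (fun h => hcc.2 h.symm), sub_zero]
    have key : ∀ p q u : {m // m ∈ G} →₀ ℕ,
        ((MvPolynomial.monomial p (1 : K) - MvPolynomial.monomial q 1) ∈ B ∨
          (MvPolynomial.monomial q (1 : K) - MvPolynomial.monomial p 1) ∈ B) →
        toricPi p = toricPi q → ord.lt q p → γ = u + p → False := by
      intro p q u hmem hpi hlt hgam
      have hlt2 : ord.lt (u + q) γ := by
        rw [hgam]
        have h2 := hord_add q p u hlt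
        rw [add_comm q u, add_comm p u] at h2
        exact h2
      have hqfib : toricPi (u + q) = μ := by
        rw [toricPi_add, ← hpi, ← toricPi_add, ← hgam, hγs]
      have hne4 : γ ≠ u + q := by
        intro h
        rw [h] at hlt2
        exact ord_irrefl (L := ord) _ hlt2
      refine absurd hlt2 (hsink ⟨u + q, (hfib μ _).mpr hqfib⟩ ?_)
      rcases hmem with hmem | hmem
      · exact ⟨hne4, p, q, u, hmem, Or.inl ⟨hgam, rfl⟩⟩
      · exact ⟨hne4, q, p, u, hmem, Or.inr ⟨hgam, rfl⟩⟩
    rcases hsupp lf hlfmem with hlfγ | hlfγ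
    · -- the leading monomial of f is γ
      obtain ⟨u, hu⟩ := exists_add_of_le hle
      have hgam : γ = u + lb := by rw [← hlfγ, hu, add_comm]
      obtain ⟨a, a', haa, hb⟩ := hBbin b hbB
      have hamem : a ∈ b.support := by
        rw [MvPolynomial.mem_support_iff, hb, binom_coeff, if_pos rfl,
          if_neg (Ne.symm haa), sub_zero]
        exact one_ne_zero
      have ha'mem : a' ∈ b.support := by
        rw [MvPolynomial.mem_support_iff, hb, binom_coeff, if_neg haa, if_pos rfl, zero_sub]
        exact neg_ne_zero.mpr one_ne_zero
      have hpi : toricPi a = toricPi a' := by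
        have hbz := hBJ b hbB
        rw [hb, map_sub, aeval_mono, aeval_mono, sub_eq_zero] at hbz
        exact mono_one_inj.mp hbz
      have hbB' : (MvPolynomial.monomial a (1 : K) - MvPolynomial.monomial a' 1) ∈ B :=
        hb ▸ hbB
      have hsupb : ∀ c ∈ b.support, c = a ∨ c = a' := by
        intro c hc
        by_contra hcc
        push_neg at hcc
        apply MvPolynomial.mem_support_iff.mp hc
        rw [hb, binom_coeff, if_neg (fun h => hcc.1 h.symm),
          if_neg (fun h => hcc.2 h.symm), sub_zero]
      rcases hsupb lb hlbmem with hlba | hlba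
      · -- leading term of b is a
        have hlt0 : ord.lt a' a := by
          have h2 := hlbmax a' ha'mem (by rw [hlba]; exact Ne.symm haa)
          rw [hlba] at h2
          exact h2
        exact key a a' u (Or.inl hbB') hpi hlt0 (by rw [hgam, hlba])
      · -- leading term of b is a'
        have hlt0 : ord.lt a a' := by
          have h2 := hlbmax a hamem (by rw [hlba]; exact haa)
          rw [hlba] at h2
          exact h2
        exact key a' a u (Or.inr hbB') hpi.symm hlt0 (by rw [hgam, hlba])
    · -- the leading monomial of f is γ₀: contradicts minimality of γ₀
      refine hγ₀min γ hγs ?_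
      have h2 := hlfmax γ hγmem (by rw [hlfγ]; exact hne3)
      rw [hlfγ] at h2
      exact h2
  · -- unique sinks ⇒ Gröbner basis
    intro hsink f hφf hf0
    have hsupne : f.support.Nonempty :=
      Finset.nonempty_iff_ne_empty.mpr fun h => hf0 (MvPolynomial.support_eq_empty.mp h)
    obtain ⟨lf, hlfmem, hlfmax⟩ := exists_ord_max (L := ord) f.support hsupne
    refine ⟨lf, hlfmem, hlfmax, ?_⟩
    obtain ⟨γ₁, hγ₁mem, hγ₁ne, hγ₁pi⟩ := exists_other f hφf lf hlfmem
    rcases hsink (toricPi lf) with hemp | ⟨γs, _, hγsuniq⟩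
    · exact absurd (hemp.false ⟨lf, (hfib _ lf).mpr rfl⟩) not_false
    obtain ⟨γ₀, hγ₀s, hγ₀min⟩ :=
      exists_ord_min (L := ord) (fiber_finite hG (toricPi lf)) ⟨lf, rfl⟩
    have hlfne : lf ≠ γ₀ := by
      intro h
      exact hγ₀min γ₁ hγ₁pi (h ▸ hlfmax γ₁ hγ₁mem hγ₁ne)
    have hγ₀eq := hγsuniq ⟨γ₀, (hfib _ γ₀).mpr hγ₀s⟩
      (fun γ' _ => hγ₀min γ'.1 ((hfib _ γ'.1).mp γ'.2))
    have hlfnot : ¬ ∀ γ' : {γ : {m // m ∈ G} →₀ ℕ //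
        MvPolynomial.aeval (fun m : {m // m ∈ G} => MvPolynomial.monomial m.1 (1 : K))
          (MvPolynomial.monomial γ (1 : K)) = MvPolynomial.monomial (toricPi lf) (1 : K)},
        fiberAdj K _ B lf γ'.1 → ¬ ord.lt γ'.1 lf := by
      intro hsinklf
      have hlfeq := hγsuniq ⟨lf, (hfib _ lf).mpr rfl⟩ hsinklf
      rw [← hγ₀eq] at hlfeq
      exact hlfne (congrArg Subtype.val hlfeq)
    push_neg at hlfnot
    obtain ⟨γ', hadj, hlt⟩ := hlfnot
    obtain ⟨hne', a, a', u, hbB, hcase⟩ := hadj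
    rcases hcase with ⟨h1, h2⟩ | ⟨h1, h2⟩
    · -- lf = u + a, γ' = u + a'
      have hlt2 : ord.lt a' a := by
        refine ord_add_cancel (L := ord) hord_add (u := u) (a := a') (b := a) ?_
        rw [← h1, ← h2]
        exact hlt
      have hane : a ≠ a' := fun h => by rw [h] at hlt2; exact ord_irrefl (L := ord) _ hlt2
      refine ⟨MvPolynomial.monomial a (1 : K) - MvPolynomial.monomial a' 1, hbB, a, ?_, ?_, ?_⟩
      · rw [MvPolynomial.mem_support_iff, binom_coeff, if_pos rfl, if_neg (Ne.symm hane),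
          sub_zero]
        exact one_ne_zero
      · intro c hc hca
        have : c = a ∨ c = a' := by
          by_contra hcc
          push_neg at hcc
          apply MvPolynomial.mem_support_iff.mp hc
          rw [binom_coeff, if_neg (fun h => hcc.1 h.symm), if_neg (fun h => hcc.2 h.symm),
            sub_zero]
        rcases this with h | h
        · exact absurd h hca
        · rw [h]; exact hlt2
      · rw [h1]
        exact le_add_self
    · -- lf = u + a', γ' = u + a
      have hlt2 : ord.lt a a' := by
        refine ord_add_cancel (L := ord) hord_add (u := u) (a := a) (b := a') ?_
        rw [← h1, ← h2]
        exact hlt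
      have hane : a ≠ a' := fun h => by rw [h] at hlt2; exact ord_irrefl (L := ord) _ hlt2
      refine ⟨MvPolynomial.monomial a (1 : K) - MvPolynomial.monomial a' 1, hbB, a', ?_, ?_, ?_⟩
      · rw [MvPolynomial.mem_support_iff, binom_coeff, if_neg hane, if_pos rfl, zero_sub]
        exact neg_ne_zero.mpr one_ne_zero
      · intro c hc hca
        have : c = a ∨ c = a' := by
          by_contra hcc
          push_neg at hcc
          apply MvPolynomial.mem_support_iff.mp hc
          rw [binom_coeff, if_neg (fun h => hcc.1 h.symm), if_neg (fun h => hcc.2 h.symm),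
            sub_zero]
        rcases this with h | h
        · rw [h]; exact hlt2
        · exact absurd h hca
      · rw [h1]
        exact le_add_self
end

section
/- Let m and M be monomials of the same degree in K[x_1,…,x_n]. Then m ∈ Borel(M) if and only if σ_i(m) ≤ σ_i(M) for every i = 1,…,n. -/
/-- A Borel move: `m'` is obtained from `m` by replacing one factor `x_j` by `x_i` with
`i < j` (variables are indexed so that `x_i` corresponds to `i : Fin n`). -/
def BorelStep (n : ℕ) (m m' : Fin n →₀ ℕ) : Prop :=
  ∃ i j : Fin n, i < j ∧ 0 < m j ∧ m' + Finsupp.single j 1 = m + Finsupp.single i 1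

/-- `Borel(M)`: the set of monomials (exponent vectors) obtainable from `M` by finite
sequences of Borel moves, including `M` itself. -/
def BorelSet (n : ℕ) (M : Fin n →₀ ℕ) : Set (Fin n →₀ ℕ) :=
  {m | Relation.ReflTransGen (BorelStep n) M m}

/-- `σ_i(m) = a_i + a_{i+1} + ⋯ + a_n` for `m = x_1^{a_1} ⋯ x_n^{a_n}`. -/
def sigmaTail (n : ℕ) (i : Fin n) (m : Fin n →₀ ℕ) : ℕ :=
  ∑ k ∈ Finset.univ.filter (fun k => i ≤ k), m k

def Snat (n : ℕ) (t : ℕ) (m : Fin n →₀ ℕ) : ℕ :=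
  ∑ k ∈ Finset.univ.filter (fun k : Fin n => t ≤ (k : ℕ)), m k

lemma Snat_add (n t : ℕ) (a b : Fin n →₀ ℕ) :
    Snat n t (a + b) = Snat n t a + Snat n t b := by
  simp [Snat, Finset.sum_add_distrib]

lemma Snat_single (n t : ℕ) (j : Fin n) (c : ℕ) :
    Snat n t (Finsupp.single j c) = if t ≤ (j : ℕ) then c else 0 := by
  simp [Snat, Finsupp.single_apply, Finset.sum_ite_eq]

lemma Snat_succ (n t : ℕ) (h : t < n) (m : Fin n →₀ ℕ) :
    Snat n t m = m ⟨t, h⟩ + Snat n (t+1) m := by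
  have hset : Finset.univ.filter (fun k : Fin n => t ≤ (k : ℕ)) =
      insert ⟨t, h⟩ (Finset.univ.filter (fun k : Fin n => t + 1 ≤ (k : ℕ))) := by
    ext k
    simp only [Finset.mem_filter, Finset.mem_univ, true_and, Finset.mem_insert]
    constructor
    · intro hk
      rcases eq_or_lt_of_le hk with h1 | h1
      · left; exact (Fin.ext h1.symm)
      · right; exact h1
    · rintro (rfl | hk)
      · exact le_refl _
      · omega
  rw [Snat, hset, Finset.sum_insert (by simp)]
  rfl

lemma Snat_zero (n : ℕ) (m : Fin n →₀ ℕ) : Snat n 0 m = ∑ k, m k := by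
  simp [Snat]

lemma Snat_of_le (n t : ℕ) (h : n ≤ t) (m : Fin n →₀ ℕ) : Snat n t m = 0 := by
  rw [Snat, Finset.sum_eq_zero]
  intro k hk
  simp only [Finset.mem_filter] at hk
  omega

lemma sigmaTail_eq_Snat (n : ℕ) (i : Fin n) (m : Fin n →₀ ℕ) :
    sigmaTail n i m = Snat n i m := by
  unfold sigmaTail Snat
  apply Finset.sum_congr _ (fun _ _ => rfl)
  ext k
  simp only [Finset.mem_filter, Finset.mem_univ, true_and, Fin.le_def]

lemma Snat_le_of_step {n : ℕ} {a b : Fin n →₀ ℕ} (h : BorelStep n a b) (t : ℕ) :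
    Snat n t b ≤ Snat n t a := by
  obtain ⟨i, j, hij, hpos, heq⟩ := h
  have hk := congrArg (Snat n t) heq
  rw [Snat_add, Snat_add, Snat_single, Snat_single] at hk
  have hij' : (i : ℕ) < (j : ℕ) := hij
  split_ifs at hk <;> omega

lemma borel_back {n : ℕ} (m : Fin n →₀ ℕ) :
    ∀ N M, (∑ t ∈ Finset.range n, (Snat n t M - Snat n t m)) = N →
      (∑ k, m k = ∑ k, M k) → (∀ t : ℕ, Snat n t m ≤ Snat n t M) →
      Relation.ReflTransGen (BorelStep n) M m := by
  intro N
  induction N using Nat.strong_induction_on with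
  | _ N ih =>
    intro M hN hdeg hle
    classical
    by_cases hall : ∀ t : ℕ, Snat n t M ≤ Snat n t m
    · have hMm : M = m := by
        ext k
        have h1 := Snat_succ n k k.isLt m
        have h2 := Snat_succ n k k.isLt M
        simp only [Fin.eta] at h1 h2
        have e1 : Snat n k m = Snat n k M := le_antisymm (hle k) (hall k)
        have e2 : Snat n (k+1) m = Snat n (k+1) M := le_antisymm (hle _) (hall _)
        omega
      rw [hMm]
    · push_neg at hall
      obtain ⟨t0, ht0⟩ := hall
      have hex : ∃ t : ℕ, Snat n t m < Snat n t M := ⟨t0, ht0⟩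
      set i := Nat.find hex with hidef
      have hi : Snat n i m < Snat n i M := Nat.find_spec hex
      have hi_min : ∀ t < i, Snat n t M = Snat n t m := by
        intro t ht
        exact le_antisymm (le_of_not_gt (Nat.find_min hex ht)) (hle t)
      have hipos : 0 < i := by
        rcases Nat.eq_zero_or_pos i with h0 | h0
        · exfalso
          rw [h0, Snat_zero, Snat_zero, ← hdeg] at hi
          omega
        · exact h0
      have hin : i < n := by
        by_contra hcon
        rw [Snat_of_le n i (le_of_not_gt hcon), Snat_of_le n i (le_of_not_gt hcon)] at hi
        omega
      -- find j : minimal index ≥ i with M_j > 0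
      have hexj : ∃ jj : ℕ, i ≤ jj ∧ ∃ h : jj < n, 0 < M ⟨jj, h⟩ := by
        have hpos : Snat n i M ≠ 0 := by omega
        obtain ⟨k, hk, hk0⟩ := Finset.exists_ne_zero_of_sum_ne_zero hpos
        simp only [Finset.mem_filter, Finset.mem_univ, true_and] at hk
        exact ⟨(k : ℕ), hk, k.isLt, by simpa [Fin.eta] using Nat.pos_of_ne_zero hk0⟩
      set j := Nat.find hexj with hjdef
      obtain ⟨hij, hjn, hMjpos⟩ := Nat.find_spec hexj
      have hj_min : ∀ t, i ≤ t → t < j → ∀ h : t < n, M ⟨t, h⟩ = 0 := by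
        intro t hit htj htn
        have := Nat.find_min hexj htj
        push_neg at this
        by_contra hc
        exact absurd (Nat.pos_of_ne_zero hc) (by simpa using this hit htn)
      -- claim A
      have claimA : ∀ k, i ≤ k → k ≤ j → Snat n k m < Snat n k M := by
        intro k hik
        induction k, hik using Nat.le_induction with
        | base => intro _; exact hi
        | succ k hik ihk =>
          intro hkj
          have hkn : k < n := by omega
          have hM0 : M ⟨k, hkn⟩ = 0 := hj_min k hik (by omega) hkn
          have h1 := Snat_succ n k hkn m
          have h2 := Snat_succ n k hkn M
          have h3 := ihk (by omega)
          omega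
      -- the Borel move
      set i' : Fin n := ⟨i - 1, by omega⟩ with hi'def
      set jf : Fin n := ⟨j, hjn⟩ with hjfdef
      obtain ⟨M', hM'def⟩ : ∃ M', M' = M - Finsupp.single jf 1 + Finsupp.single i' 1 :=
        ⟨_, rfl⟩
      have hsle : Finsupp.single jf 1 ≤ M := by
        rw [Finsupp.single_le_iff]
        exact hMjpos
      have key : M' + Finsupp.single jf 1 = M + Finsupp.single i' 1 := by
        rw [hM'def, add_right_comm, tsub_add_cancel_of_le hsle]
      have hstep : BorelStep n M M' :=
        ⟨i', jf, by simp [hi'def, hjfdef, Fin.lt_def]; omega, hMjpos, key⟩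
      have keyS : ∀ t : ℕ, Snat n t M' + (if t ≤ j then 1 else 0)
          = Snat n t M + (if t ≤ i - 1 then 1 else 0) := by
        intro t
        have hk := congrArg (Snat n t) key
        rw [Snat_add, Snat_add, Snat_single, Snat_single] at hk
        exact hk
      have newle : ∀ t : ℕ, Snat n t m ≤ Snat n t M' := by
        intro t
        have hk := keyS t
        have hlt := hle t
        by_cases h1 : i ≤ t ∧ t ≤ j
        · have := claimA t h1.1 h1.2
          split_ifs at hk <;> omega
        · split_ifs at hk <;> omega
      have hdeg' : (∑ k, m k) = ∑ k, M' k := by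
        have hk := keyS 0
        rw [if_pos (by omega), if_pos (by omega), Snat_zero, Snat_zero] at hk
        omega
      have hmono : ∀ t : ℕ, Snat n t M' ≤ Snat n t M := by
        intro t
        have hk := keyS t
        split_ifs at hk <;> omega
      have hNlt : (∑ t ∈ Finset.range n, (Snat n t M' - Snat n t m)) < N := by
        rw [← hN]
        apply Finset.sum_lt_sum
        · intro t _
          exact Nat.sub_le_sub_right (hmono t) _
        · refine ⟨i, Finset.mem_range.mpr hin, ?_⟩
          have hk := keyS i
          rw [if_pos hij, if_neg (by omega)] at hk
          have := newle i
          omega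
      exact Relation.ReflTransGen.head hstep
        (ih _ hNlt M' rfl hdeg' newle)

/-- Lemma 3.4 (De Negri): for monomials `m`, `M` of the same degree,
`m ∈ Borel(M)` iff `σ_i(m) ≤ σ_i(M)` for all `i`. -/
theorem borel_membership_iff_sigma_le {n : ℕ} (m M : Fin n →₀ ℕ)
    (hdeg : ∑ k, m k = ∑ k, M k) :
    m ∈ BorelSet n M ↔ ∀ i : Fin n, sigmaTail n i m ≤ sigmaTail n i M := by
  constructor
  · intro hmem i
    rw [sigmaTail_eq_Snat, sigmaTail_eq_Snat]
    clear hdeg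
    induction hmem with
    | refl => exact le_refl _
    | tail _ hstep ih => exact le_trans (Snat_le_of_step hstep _) ih
  · intro h
    refine borel_back m _ M rfl hdeg ?_
    intro t
    by_cases ht : t < n
    · have := h ⟨t, ht⟩
      rwa [sigmaTail_eq_Snat, sigmaTail_eq_Snat] at this
    · rw [Snat_of_le n t (le_of_not_gt ht), Snat_of_le n t (le_of_not_gt ht)]
end

section
/- Let m and M be monomials of the same degree in K[x_1,…,x_n] with m ∈ Borel(M). If σ_j(m) < σ_j(M) for some index j, then there exists an index i < j such that x_i divides m and (x_j/x_i)·m ∈ Borel(M). In particular, if m ∈ Borel(M) and m ≠ M, then some reverse Borel move applied to m yields a monomial in Borel(M). -/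
lemma sigma_add {n : ℕ} (j : Fin n) (x y : Fin n →₀ ℕ) :
    sigmaTail n j (x + y) = sigmaTail n j x + sigmaTail n j y := by
  unfold sigmaTail
  simp [Finset.sum_add_distrib]

lemma sigma_single {n : ℕ} (j b : Fin n) :
    sigmaTail n j (Finsupp.single b 1) = if j ≤ b then 1 else 0 := by
  unfold sigmaTail
  simp [Finsupp.single_apply, Finset.sum_ite_eq]

lemma part1 {n : ℕ} (m M : Fin n →₀ ℕ)
    (hm : Relation.ReflTransGen (BorelStep n) M m) :
    ∀ j : Fin n, sigmaTail n j m < sigmaTail n j M →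
      ∃ i : Fin n, i < j ∧ 0 < m i ∧
        m - Finsupp.single i 1 + Finsupp.single j 1 ∈ BorelSet n M := by
  induction hm with
  | refl => intro j hj; omega
  | @tail m₁ m hM₁ hstep IH =>
    intro j hj
    obtain ⟨a, b, hab, hb, heq⟩ := hstep
    have hσ : sigmaTail n j m + (if j ≤ b then 1 else 0)
        = sigmaTail n j m₁ + (if j ≤ a then 1 else 0) := by
      have h := congrArg (sigmaTail n j) heq
      rwa [sigma_add, sigma_add, sigma_single, sigma_single] at h
    have hk : ∀ k, m k + (if b = k then 1 else 0) = m₁ k + (if a = k then 1 else 0) := by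
      intro k
      have h := DFunLike.congr_fun heq k
      simpa [Finsupp.single_apply] using h
    have hma : m a = m₁ a + 1 := by
      have h := hk a
      simp [hab.ne'] at h
      omega
    have hsa : Finsupp.single a 1 ≤ m := Finsupp.single_le_iff.mpr (by omega)
    by_cases hcase : a < j ∧ j ≤ b
    · obtain ⟨haj, hjb⟩ := hcase
      refine ⟨a, haj, by omega, ?_⟩
      by_cases hjb' : j = b
      · have hE : m - Finsupp.single a 1 + Finsupp.single j 1 = m₁ := by
          rw [hjb', tsub_add_eq_add_tsub hsa, heq, add_tsub_cancel_right]
        rw [hE]; exact hM₁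
      · have hjb2 : j < b := lt_of_le_of_ne hjb hjb'
        refine Relation.ReflTransGen.tail hM₁ ⟨j, b, hjb2, hb, ?_⟩
        have key : m + Finsupp.single j 1 + Finsupp.single b 1
            = m₁ + Finsupp.single j 1 + Finsupp.single a 1 := by
          rw [add_right_comm m (Finsupp.single j 1) (Finsupp.single b 1), heq,
            add_right_comm]
        rw [tsub_add_eq_add_tsub hsa, tsub_add_eq_add_tsub (hsa.trans le_self_add), key,
          add_tsub_cancel_right]
    · have habj : (j ≤ a ∧ j ≤ b) ∨ (¬ j ≤ a ∧ ¬ j ≤ b) := by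
        rcases le_or_gt j a with h | h
        · exact Or.inl ⟨h, h.trans hab.le⟩
        · have hbj : b < j := by
            by_contra hc
            exact hcase ⟨h, not_lt.mp hc⟩
          exact Or.inr ⟨not_le.mpr h, not_le.mpr hbj⟩
      have hσ' : sigmaTail n j m = sigmaTail n j m₁ := by
        rcases habj with ⟨h1, h2⟩ | ⟨h1, h2⟩ <;> simp [h1, h2] at hσ <;> omega
      obtain ⟨i, hij, hmi, hmem⟩ := IH j (by omega)
      have hjb3 : b ≠ j := by
        intro h
        rcases habj with ⟨h1, _⟩ | ⟨_, h2⟩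
        · exact absurd hab (not_lt.mpr (h ▸ h1))
        · exact h2 (le_of_eq h.symm)
      by_cases hib : i = b
      · refine ⟨a, hab.trans (hib ▸ hij), by omega, ?_⟩
        have hsb : Finsupp.single b 1 ≤ m₁ := Finsupp.single_le_iff.mpr hb
        have h5 : m - Finsupp.single a 1 + Finsupp.single b 1 = m₁ := by
          rw [tsub_add_eq_add_tsub hsa, heq, add_tsub_cancel_right]
        have key : m - Finsupp.single a 1 = m₁ - Finsupp.single b 1 := by
          rw [← h5, add_tsub_cancel_right]
        rw [key, ← hib]
        exact hmem
      · have hmi2 : 0 < m i := by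
          have h1 := hk i
          rw [if_neg (Ne.symm hib)] at h1
          by_cases hai : a = i <;> simp [hai] at h1 <;> omega
        have hsi : Finsupp.single i 1 ≤ m := Finsupp.single_le_iff.mpr hmi2
        have hsi1 : Finsupp.single i 1 ≤ m₁ := Finsupp.single_le_iff.mpr hmi
        refine ⟨i, hij, hmi2, ?_⟩
        refine Relation.ReflTransGen.tail hmem ⟨a, b, hab, ?_, ?_⟩
        · rw [Finsupp.add_apply, Finsupp.tsub_apply, Finsupp.single_apply,
            Finsupp.single_apply, if_neg hib, if_neg (fun h => hjb3 h.symm)]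
          omega
        · rw [tsub_add_eq_add_tsub hsi, tsub_add_eq_add_tsub (hsi.trans le_self_add),
            tsub_add_eq_add_tsub hsi1, tsub_add_eq_add_tsub (hsi1.trans le_self_add)]
          congr 1
          rw [add_right_comm m (Finsupp.single j 1) (Finsupp.single b 1), heq,
            add_right_comm]

def Wt {n : ℕ} (m : Fin n →₀ ℕ) : ℕ := ∑ j : Fin n, sigmaTail n j m

lemma Wt_single_lt {n : ℕ} {a b : Fin n} (hab : a < b) :
    Wt (Finsupp.single a 1) < Wt (Finsupp.single b 1) := by
  unfold Wt
  simp only [sigma_single]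
  have hc : ∀ c : Fin n, (∑ j : Fin n, if j ≤ c then (1:ℕ) else 0)
      = (Finset.univ.filter (fun j => j ≤ c)).card := by
    intro c
    rw [← Finset.sum_filter, Finset.sum_const, smul_eq_mul, mul_one]
  rw [hc, hc]
  apply Finset.card_lt_card
  constructor
  · intro x hx
    simp only [Finset.mem_filter, Finset.mem_univ, true_and] at hx ⊢
    exact hx.trans hab.le
  · intro hsub
    have hbmem : b ∈ Finset.univ.filter (fun j => j ≤ b) := by simp
    have := hsub hbmem
    simp only [Finset.mem_filter, Finset.mem_univ, true_and] at this
    exact absurd hab (not_lt.mpr this)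

lemma Wt_step {n : ℕ} {m₁ m : Fin n →₀ ℕ} (h : BorelStep n m₁ m) : Wt m < Wt m₁ := by
  obtain ⟨a, b, hab, hb, heq⟩ := h
  have h1 : Wt m + Wt (Finsupp.single b 1) = Wt m₁ + Wt (Finsupp.single a 1) := by
    have := congrArg Wt heq
    unfold Wt at this ⊢
    simpa [sigma_add, Finset.sum_add_distrib] using this
  have := Wt_single_lt hab
  omega

lemma Wt_le {n : ℕ} {m M : Fin n →₀ ℕ} (hm : Relation.ReflTransGen (BorelStep n) M m) :
    Wt m ≤ Wt M := by
  induction hm with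
  | refl => exact le_refl _
  | @tail m₁ m hM₁ hstep IH => exact le_trans (Wt_step hstep).le IH


/-- Observation 3.6: if `m ∈ Borel(M)` and `σ_j(m) < σ_j(M)` then some reverse Borel move
`(x_j/x_i)·m` (with `i < j` and `x_i ∣ m`) stays in `Borel(M)`; in particular, if
`m ∈ Borel(M)` and `m ≠ M`, some reverse Borel move on `m` lands in `Borel(M)`. -/
theorem reverse_borel_move_exists {n : ℕ} (m M : Fin n →₀ ℕ)
    (hdeg : ∑ k, m k = ∑ k, M k) (hm : m ∈ BorelSet n M) :
    (∀ j : Fin n, sigmaTail n j m < sigmaTail n j M →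
      ∃ i : Fin n, i < j ∧ 0 < m i ∧
        m - Finsupp.single i 1 + Finsupp.single j 1 ∈ BorelSet n M) ∧
    (m ≠ M →
      ∃ i j : Fin n, i < j ∧ 0 < m i ∧
        m - Finsupp.single i 1 + Finsupp.single j 1 ∈ BorelSet n M) := by
  refine ⟨part1 m M hm, ?_⟩
  intro hne
  have hlt : Wt m < Wt M := by
    rcases (Relation.ReflTransGen.cases_tail hm) with h | ⟨c, hMc, hcm⟩
    · exact absurd h hne
    · exact lt_of_lt_of_le (Wt_step hcm) (Wt_le hMc)
  have hex : ∃ j : Fin n, sigmaTail n j m < sigmaTail n j M := by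
    by_contra hc
    push_neg at hc
    have : Wt M ≤ Wt m := Finset.sum_le_sum fun j _ => hc j
    omega
  obtain ⟨j, hj⟩ := hex
  obtain ⟨i, hij, hmi, hmem⟩ := part1 m M hm j hj
  exact ⟨i, j, hij, hmi, hmem⟩
end

section
/- Let M and μ be monomials in K[x_1,…,x_n] and suppose some monomial of Borel(M) divides μ. Then there exists a monomial M' ∈ Borel(M) dividing μ such that every monomial m ∈ Borel(M) dividing μ satisfies m ∈ Borel(M'); in particular M' is the unique minimal element, under the Borel order, of the set of monomials of Borel(M) dividing μ. Moreover, if m ∈ Borel(M) divides μ, m ≠ M', and j is the maximal index with σ_j(m) < σ_j(M'), then there is an index i < j such that x_i divides m, (x_j/x_i)·m ∈ Borel(M), and (x_j/x_i)·m divides μ. -/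
namespace BorelAux

variable {n : ℕ}

/-- Tail sum with a natural-number index. -/
def S (m : Fin n →₀ ℕ) (k : ℕ) : ℕ :=
  ∑ i ∈ Finset.univ.filter (fun i : Fin n => k ≤ ↑i), m i

lemma S_of_le (m : Fin n →₀ ℕ) {k : ℕ} (h : n ≤ k) : S m k = 0 := by
  unfold S
  rw [Finset.filter_false_of_mem, Finset.sum_empty]
  intro i _
  have := i.isLt
  omega

lemma S_succ (m : Fin n →₀ ℕ) {k : ℕ} (h : k < n) :
    S m k = m ⟨k, h⟩ + S m (k + 1) := by
  unfold S
  have hset : (Finset.univ.filter (fun i : Fin n => k ≤ ↑i))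
      = insert ⟨k, h⟩ (Finset.univ.filter (fun i : Fin n => k + 1 ≤ ↑i)) := by
    ext i
    simp only [Finset.mem_filter, Finset.mem_univ, true_and, Finset.mem_insert, Fin.ext_iff]
    omega
  rw [hset, Finset.sum_insert (by simp)]

lemma S_succ_le (m : Fin n →₀ ℕ) (k : ℕ) : S m (k + 1) ≤ S m k := by
  by_cases h : k < n
  · rw [S_succ m h]; omega
  · rw [S_of_le m (by omega), S_of_le m (by omega)]

lemma S_add (a b : Fin n →₀ ℕ) (k : ℕ) : S (a + b) k = S a k + S b k := by
  unfold S
  rw [← Finset.sum_add_distrib]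
  simp [Finsupp.add_apply]

lemma S_single (j : Fin n) (c k : ℕ) :
    S (Finsupp.single j c) k = if k ≤ (j : ℕ) then c else 0 := by
  unfold S
  simp only [Finsupp.single_apply]
  rw [Finset.sum_ite_eq]
  simp

lemma S_ext {a b : Fin n →₀ ℕ} (h : ∀ k, S a k = S b k) : a = b := by
  ext i
  have ha := S_succ a i.isLt
  have hb := S_succ b i.isLt
  have h1 := h i
  have h2 := h (i + 1)
  simp only [Fin.eta] at ha hb
  omega

/-- Downward induction from `n`. -/
lemma desc_ind (P : ℕ → Prop) (h0 : ∀ k, n ≤ k → P k)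
    (h1 : ∀ k, k < n → P (k + 1) → P k) : ∀ k, P k := by
  have key : ∀ d k, n ≤ k + d → P k := by
    intro d
    induction d with
    | zero => intro k hk; exact h0 k (by omega)
    | succ d ih =>
      intro k hk
      by_cases h : n ≤ k
      · exact h0 k h
      · exact h1 k (by omega) (ih (k + 1) (by omega))
  exact fun k => key n k (by omega)


lemma sigmaTail_eq (j : Fin n) (m : Fin n →₀ ℕ) : sigmaTail n j m = S m ↑j := by
  unfold sigmaTail S
  apply Finset.sum_congr
  · ext i
    simp only [Finset.mem_filter, Finset.mem_univ, true_and, Fin.le_def]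
  · intros; rfl

lemma S_step {a b : Fin n →₀ ℕ} (h : BorelStep n a b) :
    S b 0 = S a 0 ∧ ∀ k, S b k ≤ S a k := by
  obtain ⟨i, j, hij, hj, heq⟩ := h
  have key : ∀ k, S b k + (if k ≤ (j : ℕ) then 1 else 0)
      = S a k + (if k ≤ (i : ℕ) then 1 else 0) := by
    intro k
    have := congrArg (fun x => S x k) heq
    simpa [S_add, S_single] using this
  have hij' : (i : ℕ) < (j : ℕ) := hij
  constructor
  · have := key 0; simp at this; omega
  · intro k
    have := key k
    split_ifs at this <;> omega

lemma S_of_mem {M m : Fin n →₀ ℕ} (h : m ∈ BorelSet n M) :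
    S m 0 = S M 0 ∧ ∀ k, S m k ≤ S M k := by
  induction h with
  | refl => exact ⟨rfl, fun k => le_rfl⟩
  | tail _ hstep ih =>
    obtain ⟨h0, hle⟩ := S_step hstep
    exact ⟨h0.trans ih.1, fun k => (hle k).trans (ih.2 k)⟩

lemma mem_of_S : ∀ (M m : Fin n →₀ ℕ), S m 0 = S M 0 → (∀ k, S m k ≤ S M k) →
    m ∈ BorelSet n M := by
  have key : ∀ (D : ℕ) (M m : Fin n →₀ ℕ),
      (∑ k ∈ Finset.range n, (S M k - S m k)) ≤ D →
      S m 0 = S M 0 → (∀ k, S m k ≤ S M k) → m ∈ BorelSet n M := by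
    intro D
    induction D with
    | zero =>
      intro M m hD h0 hle
      have hz : ∀ k ∈ Finset.range n, S M k - S m k = 0 := by
        intro k hk
        have h2 : S M k - S m k ≤ ∑ k ∈ Finset.range n, (S M k - S m k) :=
          Finset.single_le_sum (f := fun k => S M k - S m k) (fun k _ => Nat.zero_le _) hk
        omega
      have heq : ∀ k, S m k = S M k := by
        intro k
        by_cases h : k < n
        · have := hz k (Finset.mem_range.mpr h); have := hle k; omega
        · rw [S_of_le m (by omega), S_of_le M (by omega)]
      rw [show m = M from S_ext heq]
      exact Relation.ReflTransGen.refl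
    | succ D ih =>
      intro M m hD h0 hle
      by_cases hc : ∀ k, S m k = S M k
      · rw [S_ext hc]; exact Relation.ReflTransGen.refl
      · push_neg at hc
        obtain ⟨k0, hk0⟩ := hc
        have hk0' : S m k0 < S M k0 := lt_of_le_of_ne (hle k0) hk0
        have hex : ∃ k, S m k < S M k := ⟨k0, hk0'⟩
        classical
        obtain ⟨c, hcs, hcmin'⟩ : ∃ c, S m c < S M c ∧ ∀ l < c, ¬ S m l < S M l :=
          ⟨Nat.find hex, Nat.find_spec hex, fun l hl => Nat.find_min hex hl⟩
        have hcmin : ∀ l < c, S m l = S M l := by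
          intro l hl
          have := hcmin' l hl
          have := hle l
          omega
        have hc0 : 0 < c := by
          rcases Nat.eq_zero_or_pos c with h | h
          · rw [h] at hcs; omega
          · exact h
        have hcn : c < n := by
          by_contra hcn
          rw [S_of_le m (by omega), S_of_le M (by omega)] at hcs; omega
        have hexd : ∃ k, c ≤ k ∧ S M k ≤ S m k :=
          ⟨n, by omega, by rw [S_of_le m le_rfl, S_of_le M le_rfl]⟩
        obtain ⟨d, hds, hdn, hdmin'⟩ :
            ∃ d, (c ≤ d ∧ S M d ≤ S m d) ∧ d ≤ n ∧
              ∀ l < d, ¬ (c ≤ l ∧ S M l ≤ S m l) :=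
          ⟨Nat.find hexd, Nat.find_spec hexd,
            Nat.find_min' hexd ⟨by omega,
              by rw [S_of_le m le_rfl, S_of_le M le_rfl]⟩,
            fun l hl => Nat.find_min hexd hl⟩
        have hdmin : ∀ l, c ≤ l → l < d → S m l < S M l := by
          intro l h1 h2
          have := hdmin' l h2
          have := hle l
          omega
        have hcd : c < d := by
          by_contra h
          have hdc : d = c := le_antisymm (not_lt.mp h) hds.1
          have h2 := hds.2
          rw [hdc] at h2
          omega
        have hcn' : c - 1 < n := by omega
        have hdn' : d - 1 < n := by omega
        set i : Fin n := ⟨c - 1, hcn'⟩ with hi_def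
        set j : Fin n := ⟨d - 1, hdn'⟩ with hj_def
        -- M j > 0
        have hSd1 : S M (d - 1) = M j + S M d := by
          have := S_succ M (show d - 1 < n by omega)
          rw [show d - 1 + 1 = d by omega] at this
          exact this
        have hmd1 : S m (d - 1) < S M (d - 1) :=
          hdmin (d - 1) (by omega) (by omega)
        have hMj : 0 < M j := by
          have h1 : S m d ≤ S m (d - 1) := by
            have := S_succ_le m (d - 1)
            rw [show d - 1 + 1 = d by omega] at this
            exact this
          have := hds.2
          omega
        set M1 : Fin n →₀ ℕ := M - Finsupp.single j 1 + Finsupp.single i 1 with hM1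
        have heq1 : M1 + Finsupp.single j 1 = M + Finsupp.single i 1 := by
          ext l
          simp only [hM1, Finsupp.add_apply, Finsupp.tsub_apply, Finsupp.single_apply]
          by_cases hjl : j = l
          · subst hjl
            simp only [if_pos trivial, eq_self_iff_true]
            split_ifs <;> omega
          · simp only [if_neg hjl]
            split_ifs <;> omega
        have hstep : BorelStep n M M1 := ⟨i, j, by
          simp only [Fin.lt_def, hi_def, hj_def]; omega, hMj, heq1⟩
        have hSM1 : ∀ k, S M1 k + (if k ≤ d - 1 then 1 else 0)
            = S M k + (if k ≤ c - 1 then 1 else 0) := by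
          intro k
          have := congrArg (fun x => S x k) heq1
          simpa [S_add, S_single] using this
        have hle1 : ∀ k, S m k ≤ S M1 k := by
          intro k
          have h1 := hSM1 k
          by_cases h2 : k ≤ c - 1
          · rw [if_pos h2, if_pos (by omega)] at h1
            have := hle k; omega
          · by_cases h3 : k ≤ d - 1
            · rw [if_pos h3, if_neg h2] at h1
              have := hdmin k (by omega) (by omega)
              omega
            · rw [if_neg h3, if_neg h2] at h1
              have := hle k; omega
        have h01 : S m 0 = S M1 0 := by
          have h1 := hSM1 0
          rw [if_pos (by omega), if_pos (by omega)] at h1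
          omega
        have hMle : ∀ k, S M1 k ≤ S M k := by
          intro k
          have h1 := hSM1 k
          split_ifs at h1 <;> omega
        have hmeas : (∑ k ∈ Finset.range n, (S M1 k - S m k)) ≤ D := by
          have hstrict : (∑ k ∈ Finset.range n, (S M1 k - S m k))
              < ∑ k ∈ Finset.range n, (S M k - S m k) := by
            apply Finset.sum_lt_sum
            · intro k _
              have := hMle k; have := hle1 k; omega
            · refine ⟨c, Finset.mem_range.mpr hcn, ?_⟩
              have h1 := hSM1 c
              rw [if_pos (by omega), if_neg (by omega)] at h1
              have := hle1 c
              omega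
          omega
        exact Relation.ReflTransGen.head hstep (ih M1 m hmeas h01 hle1)
  intro M m h0 hle
  exact key _ M m le_rfl h0 hle


/-- The greedy tail-sum bound. -/
def tmin (n : ℕ) (M μ : Fin n →₀ ℕ) (k : ℕ) : ℕ :=
  if h : k < n then min (S M k) (μ ⟨k, h⟩ + tmin n M μ (k + 1)) else 0
termination_by n - k

lemma tmin_of_lt (M μ : Fin n →₀ ℕ) {k : ℕ} (h : k < n) :
    tmin n M μ k = min (S M k) (μ ⟨k, h⟩ + tmin n M μ (k + 1)) := by
  rw [tmin, dif_pos h]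

lemma tmin_of_le (M μ : Fin n →₀ ℕ) {k : ℕ} (h : n ≤ k) : tmin n M μ k = 0 := by
  rw [tmin, dif_neg (by omega)]

lemma tmin_le_S (M μ : Fin n →₀ ℕ) (k : ℕ) : tmin n M μ k ≤ S M k := by
  by_cases h : k < n
  · rw [tmin_of_lt M μ h]; exact min_le_left _ _
  · rw [tmin_of_le M μ (by omega)]; exact Nat.zero_le _

lemma tmin_succ_le (M μ : Fin n →₀ ℕ) (k : ℕ) : tmin n M μ (k + 1) ≤ tmin n M μ k := by
  by_cases h : k < n
  · rw [tmin_of_lt M μ h]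
    refine le_min ((tmin_le_S M μ (k+1)).trans (S_succ_le M k)) (by omega)
  · rw [tmin_of_le M μ (show n ≤ k + 1 by omega)]; exact Nat.zero_le _

/-- Any Borel element of `M` dividing `μ` has tail sums bounded by `tmin`. -/
lemma S_le_tmin (M μ m : Fin n →₀ ℕ) (hle : ∀ k, S m k ≤ S M k) (hμ : m ≤ μ) :
    ∀ k, S m k ≤ tmin n M μ k := by
  refine desc_ind (n := n) (fun k => S m k ≤ tmin n M μ k) (fun k hk => ?_) (fun k hk ih => ?_)
  · show S m k ≤ tmin n M μ k
    rw [S_of_le m hk, tmin_of_le M μ hk]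
  · show S m k ≤ tmin n M μ k
    have ih' : S m (k + 1) ≤ tmin n M μ (k + 1) := ih
    rw [tmin_of_lt M μ hk, S_succ m hk]
    refine le_min ((S_succ m hk) ▸ hle k) (add_le_add (hμ ⟨k, hk⟩) ih')

end BorelAux

open BorelAux in
/-- Lemma 3.7: if some monomial of `Borel(M)` divides `μ`, there is a (unique Borel-minimal)
monomial `M' ∈ Borel(M)` dividing `μ` such that every `m ∈ Borel(M)` dividing `μ` lies in
`Borel(M')`; moreover, if such an `m` differs from `M'` and `j` is maximal with
`σ_j(m) < σ_j(M')`, then some reverse Borel move `(x_j/x_i)·m` (with `i < j`, `x_i ∣ m`)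
lies in `Borel(M)` and divides `μ`.  (Divisibility of monomials is the pointwise order
on exponent vectors.) -/
theorem borel_min_dividing {n : ℕ} (M μ : Fin n →₀ ℕ)
    (h : ∃ m ∈ BorelSet n M, m ≤ μ) :
    ∃ M' ∈ BorelSet n M, M' ≤ μ ∧
      (∀ m ∈ BorelSet n M, m ≤ μ → m ∈ BorelSet n M') ∧
      (∀ m ∈ BorelSet n M, m ≤ μ → m ≠ M' →
        ∀ j : Fin n, sigmaTail n j m < sigmaTail n j M' →
          (∀ j' : Fin n, j < j' → ¬ sigmaTail n j' m < sigmaTail n j' M') →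
          ∃ i : Fin n, i < j ∧ 0 < m i ∧
            m - Finsupp.single i 1 + Finsupp.single j 1 ∈ BorelSet n M ∧
            m - Finsupp.single i 1 + Finsupp.single j 1 ≤ μ) := by
  classical
  obtain ⟨m0, hm0B, hm0μ⟩ := h
  obtain ⟨hm00, hm0le⟩ := S_of_mem hm0B
  -- define t' : the tail sums of the minimal element
  set t' : ℕ → ℕ := fun k => if k = 0 then S M 0 else tmin n M μ k with ht'
  have hm0μ' : ∀ i, m0 i ≤ μ i := fun i => hm0μ i
  have hm0t : ∀ k, S m0 k ≤ tmin n M μ k := S_le_tmin M μ m0 hm0le hm0μ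
  have ht'mono : ∀ k, t' (k + 1) ≤ t' k := by
    intro k
    simp only [ht']
    rcases Nat.eq_zero_or_pos k with hk | hk
    · subst hk
      simp only [if_neg (Nat.one_ne_zero), if_pos rfl]
      exact (tmin_le_S M μ 1).trans (S_succ_le M 0)
    · rw [if_neg (by omega), if_neg (by omega)]
      exact tmin_succ_le M μ k
  have ht'le : ∀ k, t' k ≤ S M k := by
    intro k
    simp only [ht']
    split_ifs with hk
    · subst hk; exact le_rfl
    · exact tmin_le_S M μ k
  have hmt' : ∀ (m : Fin n →₀ ℕ), m ∈ BorelSet n M → m ≤ μ → ∀ k, S m k ≤ t' k := by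
    intro m hmB hmμ k
    obtain ⟨h0, hle⟩ := S_of_mem hmB
    simp only [ht']
    split_ifs with hk
    · subst hk; exact le_of_eq h0
    · exact S_le_tmin M μ m hle hmμ k
  -- construct M'
  set M' : Fin n →₀ ℕ :=
    Finsupp.equivFunOnFinite.symm (fun i : Fin n => t' ↑i - t' (↑i + 1)) with hM'
  have hM'app : ∀ i : Fin n, M' i = t' ↑i - t' (↑i + 1) := by
    intro i
    simp [hM']
  have hSM' : ∀ k, S M' k = t' k := by
    refine desc_ind (n := n) (fun k => S M' k = t' k) (fun k hk => ?_) (fun k hk ih => ?_)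
    · show S M' k = t' k
      rw [S_of_le M' hk]
      simp only [ht']
      split_ifs with h0
      · subst h0
        rw [S_of_le M (by omega)]
      · rw [tmin_of_le M μ hk]
    · show S M' k = t' k
      have ih' : S M' (k + 1) = t' (k + 1) := ih
      have happ : M' ⟨k, hk⟩ = t' k - t' (k + 1) := hM'app ⟨k, hk⟩
      rw [S_succ M' hk, happ, ih']
      have := ht'mono k
      omega
  have hM'0 : S M' 0 = S M 0 := by
    rw [hSM' 0]
    simp [ht']
  have hM'B : M' ∈ BorelSet n M :=
    mem_of_S M M' hM'0 (fun k => (hSM' k) ▸ ht'le k)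
  have hM'μ : M' ≤ μ := by
    intro i
    rw [hM'app i]
    rcases Nat.eq_zero_or_pos (i : ℕ) with hi | hi
    · have hn : 0 < n := i.pos
      have h1 : S m0 1 ≤ tmin n M μ 1 := hm0t 1
      have h2 : S m0 0 = m0 ⟨0, hn⟩ + S m0 1 := S_succ m0 hn
      have h3 : m0 ⟨0, hn⟩ ≤ μ ⟨0, hn⟩ := hm0μ' _
      have h4 : μ ⟨0, hn⟩ = μ i := by congr 1; exact Fin.ext (by simp [hi])
      rw [hi]
      simp only [ht', if_pos rfl, Nat.zero_add, if_neg (Nat.one_ne_zero)]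
      omega
    · simp only [ht']
      rw [if_neg (by omega), if_neg (by omega)]
      have h1 := tmin_of_lt M μ i.isLt
      have h2 : (⟨(i : ℕ), i.isLt⟩ : Fin n) = i := Fin.eta i _
      rw [h2] at h1
      have := min_le_right (S M ↑i) (μ i + tmin n M μ (↑i + 1))
      omega
  have hmin : ∀ m ∈ BorelSet n M, m ≤ μ → m ∈ BorelSet n M' := by
    intro m hmB hmμ
    obtain ⟨h0, _⟩ := S_of_mem hmB
    exact mem_of_S M' m (h0.trans hM'0.symm) (fun k => (hSM' k) ▸ hmt' m hmB hmμ k)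
  refine ⟨M', hM'B, hM'μ, hmin, ?_⟩
  intro m hmB hmμ _hne j hj hjmax
  have hmB' : ∀ k, S m k ≤ S M' k := fun k => (hSM' k) ▸ hmt' m hmB hmμ k
  have hm0S : S m 0 = S M' 0 := by
    obtain ⟨h0, _⟩ := S_of_mem hmB
    rw [hM'0]; exact h0
  rw [sigmaTail_eq, sigmaTail_eq] at hj
  set J : ℕ := (j : ℕ) with hJ
  have hJn : J < n := j.isLt
  -- above J, the tail sums agree
  have habove : ∀ k, J < k → S m k = S M' k := by
    intro k hk
    by_cases hkn : k < n
    · have h1 : ¬ sigmaTail n ⟨k, hkn⟩ m < sigmaTail n ⟨k, hkn⟩ M' := by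
        apply hjmax
        simp only [Fin.lt_def]
        omega
      rw [sigmaTail_eq, sigmaTail_eq] at h1
      have := hmB' k
      simp only at h1
      omega
    · rw [S_of_le m (by omega), S_of_le M' (by omega)]
  have hJ0 : 0 < J := by
    rcases Nat.eq_zero_or_pos J with h | h
    · rw [h] at hj; omega
    · exact h
  -- m_J < M'_J ≤ μ_J
  have hmJ : m j + 1 ≤ M' j := by
    have h1 : S m J = m j + S m (J + 1) := by
      have := S_succ m hJn
      rw [show (⟨J, hJn⟩ : Fin n) = j from Fin.ext rfl] at this
      exact this
    have h2 : S M' J = M' j + S M' (J + 1) := by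
      have := S_succ M' hJn
      rw [show (⟨J, hJn⟩ : Fin n) = j from Fin.ext rfl] at this
      exact this
    have h3 : S m (J + 1) = S M' (J + 1) := habove (J + 1) (by omega)
    omega
  -- find I : greatest index < J with S m I = S M' I
  have hexI : ∃ I, I < J ∧ S m I = S M' I ∧ ∀ l, I < l → l ≤ J → S m l < S M' l := by
    set P : ℕ → Prop := fun l => S M' l ≤ S m l with hP
    have hP0 : P 0 := le_of_eq hm0S.symm
    set I := Nat.findGreatest P (J - 1) with hI
    have hPI : P I := Nat.findGreatest_spec (Nat.zero_le _) hP0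
    have hIle : I ≤ J - 1 := Nat.findGreatest_le _
    refine ⟨I, by omega, le_antisymm (hmB' I) hPI, ?_⟩
    intro l hl1 hl2
    rcases Nat.lt_or_ge l J with h | h
    · have := Nat.findGreatest_is_greatest (by omega : I < l) (by omega : l ≤ J - 1)
      simp only [hP] at this
      have := hmB' l
      omega
    · have : l = J := by omega
      rw [this]
      exact hj
  obtain ⟨I, hIJ, hImeq, hIstrict⟩ := hexI
  have hIn : I < n := by omega
  set i : Fin n := ⟨I, hIn⟩ with hi
  -- m i > 0
  have hmi : 0 < m i := by
    have h1 : S m I = m i + S m (I + 1) := S_succ m hIn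
    have h2 : S M' I = M' i + S M' (I + 1) := S_succ M' hIn
    have h3 : S m (I + 1) < S M' (I + 1) := hIstrict (I + 1) (by omega) (by omega)
    have h4 := hmB' (I + 1)
    omega
  refine ⟨i, by simp only [Fin.lt_def, hi]; omega, hmi, ?_, ?_⟩
  · -- membership in BorelSet n M
    set m2 : Fin n →₀ ℕ := m - Finsupp.single i 1 + Finsupp.single j 1 with hm2
    have heq2 : m2 + Finsupp.single i 1 = m + Finsupp.single j 1 := by
      ext l
      simp only [hm2, Finsupp.add_apply, Finsupp.tsub_apply, Finsupp.single_apply]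
      by_cases hil : i = l
      · subst hil
        simp only [if_pos trivial, eq_self_iff_true]
        split_ifs <;> omega
      · simp only [if_neg hil]
        split_ifs <;> omega
    have hS2 : ∀ k, S m2 k + (if k ≤ I then 1 else 0)
        = S m k + (if k ≤ J then 1 else 0) := by
      intro k
      have := congrArg (fun x => S x k) heq2
      simpa [S_add, S_single] using this
    obtain ⟨hm0M, hmleM⟩ := S_of_mem hmB
    have hSM'leM : ∀ k, S M' k ≤ S M k := fun k => (hSM' k) ▸ ht'le k
    refine mem_of_S M m2 ?_ ?_
    · have h1 := hS2 0
      rw [if_pos (Nat.zero_le _), if_pos (Nat.zero_le _)] at h1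
      omega
    · intro k
      have h1 := hS2 k
      by_cases h2 : k ≤ I
      · rw [if_pos h2, if_pos (by omega)] at h1
        have := hmleM k
        omega
      · by_cases h3 : k ≤ J
        · rw [if_neg h2, if_pos h3] at h1
          have h4 : S m k < S M' k := hIstrict k (by omega) h3
          have := hSM'leM k
          omega
        · rw [if_neg h2, if_neg h3] at h1
          have := hmleM k
          omega
  · -- divisibility by μ
    intro l
    simp only [Finsupp.add_apply, Finsupp.tsub_apply, Finsupp.single_apply]
    by_cases hjl : j = l
    · subst hjl
      have h1 : M' j ≤ μ j := hM'μ j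
      have h2 : (i : ℕ) ≠ (j : ℕ) := by simp only [hi]; omega
      rw [if_pos rfl, if_neg (fun h => h2 (congrArg Fin.val h))]
      omega
    · rw [if_neg hjl]
      have := hmμ l
      split_ifs <;> omega
end

section
/- Let M and N be monomials in K[x_1,…,x_n] and k ≥ 1 an integer. Then N factors as N = M_1⋯M_k with M_1,…,M_k ∈ Borel(M) if and only if N ∈ Borel(M^k). -/
/-!
Borel moves are compatible with multiplication, so a product of elements of `Borel(M_ℓ)`
lies in `Borel(∏ M_ℓ)`. Conversely, a Borel move `x_j ↦ x_i` on a product `∏ M_ℓ` can be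
performed on any single factor divisible by `x_j`; following a chain of moves from `∏ M_ℓ`
factor by factor gives the factorization.
-/

variable {n : ℕ}

namespace BorelStep

lemma add_right {m m' : Fin n →₀ ℕ} (c : Fin n →₀ ℕ) (h : BorelStep n m m') :
    BorelStep n (m + c) (m' + c) := by
  obtain ⟨i, j, hij, hj, heq⟩ := h
  refine ⟨i, j, hij, ?_, ?_⟩
  · simp only [Finsupp.add_apply]; omega
  · rw [add_right_comm, heq, add_right_comm]

lemma exists_update_of_sum {ι : Type*} [Fintype ι] [DecidableEq ι] {f : ι → Fin n →₀ ℕ}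
    {c : Fin n →₀ ℕ} (h : BorelStep n (∑ ℓ, f ℓ) c) :
    ∃ ℓ₀ v, BorelStep n (f ℓ₀) v ∧ c = ∑ ℓ, Function.update f ℓ₀ v ℓ := by
  obtain ⟨i, j, hij, hj, heq⟩ := h
  obtain ⟨ℓ₀, -, hℓ₀⟩ : ∃ ℓ ∈ Finset.univ, f ℓ j ≠ 0 := by
    rw [Finsupp.finsetSum_apply] at hj
    exact Finset.exists_ne_zero_of_sum_ne_zero hj.ne'
  set v := f ℓ₀ + Finsupp.single i 1 - Finsupp.single j 1
  have hv : v + Finsupp.single j 1 = f ℓ₀ + Finsupp.single i 1 := by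
    refine tsub_add_cancel_of_le (Finsupp.single_le_iff.2 ?_)
    simp only [Finsupp.add_apply]
    omega
  refine ⟨ℓ₀, v, ⟨i, j, hij, Nat.pos_of_ne_zero hℓ₀, hv⟩, ?_⟩
  apply add_right_cancel (b := Finsupp.single j 1)
  rw [heq, Finset.sum_update_of_mem (Finset.mem_univ ℓ₀),
    Finset.sum_eq_add_sum_sdiff_singleton_of_mem (Finset.mem_univ ℓ₀), add_right_comm, ← hv,
    add_right_comm]

end BorelStep

namespace BorelSet

lemma add_mem_add {A B a b : Fin n →₀ ℕ} (ha : a ∈ BorelSet n A) (hb : b ∈ BorelSet n B) :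
    a + b ∈ BorelSet n (A + B) := by
  have hl : Relation.ReflTransGen (BorelStep n) (A + B) (a + B) :=
    ha.lift (· + B) fun _ _ h => h.add_right B
  have hr : Relation.ReflTransGen (BorelStep n) (a + B) (a + b) := by
    simpa only [add_comm a] using hb.lift (· + a) fun _ _ h => h.add_right a
  exact hl.trans hr

lemma sum_mem_sum {ι : Type*} (s : Finset ι) {g f : ι → Fin n →₀ ℕ}
    (hf : ∀ ℓ ∈ s, f ℓ ∈ BorelSet n (g ℓ)) : ∑ ℓ ∈ s, f ℓ ∈ BorelSet n (∑ ℓ ∈ s, g ℓ) := by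
  classical
  induction s using Finset.induction_on with
  | empty => exact Relation.ReflTransGen.refl
  | insert ℓ s hℓ ih =>
    rw [Finset.sum_insert hℓ, Finset.sum_insert hℓ]
    exact add_mem_add (hf ℓ (Finset.mem_insert_self ℓ s))
      (ih fun ℓ' hℓ' => hf ℓ' (Finset.mem_insert_of_mem hℓ'))

lemma exists_sum_eq_of_mem_sum {ι : Type*} [Fintype ι] {g : ι → Fin n →₀ ℕ} {N : Fin n →₀ ℕ}
    (hN : N ∈ BorelSet n (∑ ℓ, g ℓ)) :
    ∃ f : ι → Fin n →₀ ℕ, (∀ ℓ, f ℓ ∈ BorelSet n (g ℓ)) ∧ ∑ ℓ, f ℓ = N := by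
  classical
  induction hN with
  | refl => exact ⟨g, fun _ => Relation.ReflTransGen.refl, rfl⟩
  | tail _ hstep ih =>
    obtain ⟨f, hf, rfl⟩ := ih
    obtain ⟨ℓ₀, v, hv, rfl⟩ := hstep.exists_update_of_sum
    refine ⟨Function.update f ℓ₀ v, fun ℓ => ?_, rfl⟩
    rcases eq_or_ne ℓ ℓ₀ with rfl | hne
    · rw [Function.update_self]
      exact (hf ℓ).tail hv
    · simpa only [Function.update_of_ne hne] using hf ℓ

theorem mem_sum_iff {ι : Type*} [Fintype ι] (g : ι → Fin n →₀ ℕ) (N : Fin n →₀ ℕ) :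
    N ∈ BorelSet n (∑ ℓ, g ℓ) ↔
      ∃ f : ι → Fin n →₀ ℕ, (∀ ℓ, f ℓ ∈ BorelSet n (g ℓ)) ∧ ∑ ℓ, f ℓ = N := by
  refine ⟨exists_sum_eq_of_mem_sum, ?_⟩
  rintro ⟨f, hf, rfl⟩
  exact sum_mem_sum Finset.univ fun ℓ _ => hf ℓ

end BorelSet

theorem borel_factorization_iff_general {n : ℕ} (M N : Fin n →₀ ℕ) (k : ℕ) :
    (∃ f : Fin k → (Fin n →₀ ℕ), (∀ ℓ : Fin k, f ℓ ∈ BorelSet n M) ∧ ∑ ℓ, f ℓ = N) ↔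
      N ∈ BorelSet n (k • M) := by
  simpa only [Finset.sum_const, Finset.card_univ, Fintype.card_fin] using
    (BorelSet.mem_sum_iff (fun _ : Fin k => M) N).symm

/-- Lemma 3.9: a monomial `N` factors as a product `M_1 ⋯ M_k` with all `M_ℓ ∈ Borel(M)`
iff `N ∈ Borel(M^k)`.  (Products of monomials correspond to sums of exponent vectors,
and `M^k` corresponds to `k • M`.) -/
theorem borel_factorization_iff {n : ℕ} (M N : Fin n →₀ ℕ) (k : ℕ) (hk : 1 ≤ k) :
    (∃ f : Fin k → (Fin n →₀ ℕ), (∀ ℓ : Fin k, f ℓ ∈ BorelSet n M) ∧ ∑ ℓ, f ℓ = N) ↔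
      N ∈ BorelSet n (k • M) :=
  borel_factorization_iff_general M N k
end

section
/- Let M and μ be monomials in K[x_1,…,x_n] and k ≥ 1 an integer, and suppose some monomial of Borel(M^k) divides μ. Let P be the unique minimal monomial, under the Borel order, of Borel(M^k) dividing μ. Suppose P' ∈ Borel(M^k) divides μ, P' ≠ P, and P' factors as P' = P'_1⋯P'_k with each P'_ℓ ∈ Borel(M). Then there exist indices 1 ≤ i < j ≤ n and 1 ≤ ℓ ≤ k such that x_i divides P'_ℓ, (x_j/x_i)·P'_ℓ ∈ Borel(M), (x_j/x_i)·P' divides μ, and (x_j/x_i)·P' ∈ Borel(M^k). -/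
/-
Write `deg_{<t} m` for the degree of `m` in the variables `x_r`, `r < t`. Then `B ∈ Borel(A)`
if and only if `A` and `B` have the same degree and `deg_{<t} A ≤ deg_{<t} B` for every `t`;
consequently moving one factor of `m` from `x_i` to `x_j`, `i < j`, stays above `A` exactly when
`deg_{<t} A < deg_{<t} m` for `i < t ≤ j`.

By minimality `P' ∈ Borel(P)`. At a `j` with `deg_{<j} P < deg_{<j} P'` but
`deg_{<j+1} P' ≤ deg_{<j+1} P` one has `P'_j < P_j ≤ μ_j`, and since `k · deg_{<j} M ≤ deg_{<j} P` some factor `P'_ℓ` satisfies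
`deg_{<j} M < deg_{<j} P'_ℓ`. Going left from `j` to the last `t` where this fails produces an
`i < j` with `x_i ∣ P'_ℓ` and strict inequality on `(i, j]`, so the move `x_i → x_j` is legal
for `P'_ℓ`, and also for `P'`, where the other `k - 1` factors contribute at least
`(k - 1) · deg_{<t} M`.
-/

open Finsupp

section PrefixDegree

variable {n : ℕ}

def prefixDegree (t : ℕ) : (Fin n →₀ ℕ) →+ ℕ where
  toFun m := ∑ r : Fin n, if (r : ℕ) < t then m r else 0
  map_zero' := by simp
  map_add' a b := by simp only [coe_add, Pi.add_apply, ← Finset.sum_add_distrib, ite_add_zero]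

theorem prefixDegree_apply (t : ℕ) (m : Fin n →₀ ℕ) :
    prefixDegree t m = ∑ r : Fin n, if (r : ℕ) < t then m r else 0 := rfl

theorem prefixDegree_zero (m : Fin n →₀ ℕ) : prefixDegree 0 m = 0 := by
  simp [prefixDegree_apply]

theorem prefixDegree_single (i : Fin n) (c t : ℕ) :
    prefixDegree t (single i c) = if (i : ℕ) < t then c else 0 := by
  rw [prefixDegree_apply, Finset.sum_eq_single i (fun r _ hr => by simp [hr]) (by simp)]
  simp

theorem prefixDegree_succ (m : Fin n →₀ ℕ) {t : ℕ} (ht : t < n) :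
    prefixDegree (t + 1) m = prefixDegree t m + m ⟨t, ht⟩ := by
  classical
  rw [prefixDegree_apply, prefixDegree_apply, ← Fintype.sum_ite_eq' ⟨t, ht⟩ m,
    ← Finset.sum_add_distrib]
  refine Finset.sum_congr rfl fun r _ => ?_
  have : r = ⟨t, ht⟩ ↔ (r : ℕ) = t := Fin.ext_iff
  split_ifs <;> omega

theorem prefixDegree_mono (m : Fin n →₀ ℕ) {a b : ℕ} (hab : a ≤ b) :
    prefixDegree a m ≤ prefixDegree b m := by
  simp only [prefixDegree_apply]
  exact Finset.sum_le_sum fun r _ => by split_ifs <;> omega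

theorem prefixDegree_of_le (m : Fin n →₀ ℕ) {t : ℕ} (ht : n ≤ t) :
    prefixDegree t m = prefixDegree n m := by
  simp only [prefixDegree_apply]
  exact Finset.sum_congr rfl fun r _ => by simp [r.isLt, r.isLt.trans_le ht]

theorem ext_of_prefixDegree {A B : Fin n →₀ ℕ} (h : ∀ t, prefixDegree t A = prefixDegree t B) :
    A = B := by
  ext r
  have hA := prefixDegree_succ A r.isLt
  have hB := prefixDegree_succ B r.isLt
  have := h r
  have := h (r + 1)
  simp only [Fin.eta] at hA hB
  omega

theorem prefixDegree_sub_single_add_single {m : Fin n →₀ ℕ} {a : Fin n} (ha : 0 < m a)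
    (b : Fin n) (t : ℕ) :
    prefixDegree t (m - single a 1 + single b 1) + (if (a : ℕ) < t then 1 else 0) =
      prefixDegree t m + (if (b : ℕ) < t then 1 else 0) := by
  have hmove : m - single a 1 + single b 1 + single a 1 = m + single b 1 := by
    rw [add_right_comm, tsub_add_cancel_of_le (single_le_iff.mpr ha)]
  simpa only [map_add, prefixDegree_single] using congrArg (prefixDegree t) hmove

end PrefixDegree

section PrefixDominates

variable {n : ℕ}

def PrefixDominates (A B : Fin n →₀ ℕ) : Prop :=
  prefixDegree n A = prefixDegree n B ∧ ∀ t, prefixDegree t A ≤ prefixDegree t B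

theorem PrefixDominates.refl (A : Fin n →₀ ℕ) : PrefixDominates A A :=
  ⟨rfl, fun _ => le_rfl⟩

theorem PrefixDominates.trans {A B C : Fin n →₀ ℕ} (hAB : PrefixDominates A B)
    (hBC : PrefixDominates B C) : PrefixDominates A C :=
  ⟨hAB.1.trans hBC.1, fun t => (hAB.2 t).trans (hBC.2 t)⟩

theorem PrefixDominates.exists_prefixDegree_lt {A B : Fin n →₀ ℕ} (h : PrefixDominates A B)
    (hne : A ≠ B) : ∃ s, s < n ∧ prefixDegree s A < prefixDegree s B := by
  obtain ⟨s, hs⟩ : ∃ s, prefixDegree s A < prefixDegree s B := by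
    by_contra! hc
    exact hne (ext_of_prefixDegree fun t => (h.2 t).antisymm (hc t))
  refine ⟨s, lt_of_not_ge fun hns => ?_, hs⟩
  rw [prefixDegree_of_le A hns, prefixDegree_of_le B hns, h.1] at hs
  exact hs.false

theorem PrefixDominates.sub_single_add_single {A m : Fin n →₀ ℕ} (h : PrefixDominates A m)
    {i j : Fin n} (hi : 0 < m i)
    (hstrict : ∀ t, (i : ℕ) < t → t ≤ j → prefixDegree t A < prefixDegree t m) :
    PrefixDominates A (m - single i 1 + single j 1) := by
  have hmove := prefixDegree_sub_single_add_single hi j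
  refine ⟨?_, fun t => ?_⟩
  · have := hmove n
    simp only [i.isLt, j.isLt, if_true] at this
    have := h.1
    omega
  · have key := hmove t
    have := h.2 t
    by_cases hit : (i : ℕ) < t ∧ t ≤ j
    · have := hstrict t hit.1 hit.2
      split_ifs at key <;> omega
    · split_ifs at key <;> omega

theorem PrefixDominates.sub_single_add_single_left {m B : Fin n →₀ ℕ} (h : PrefixDominates m B)
    {i j : Fin n} (hj : 0 < m j)
    (hstrict : ∀ t, (i : ℕ) < t → t ≤ j → prefixDegree t m < prefixDegree t B) :
    PrefixDominates (m - single j 1 + single i 1) B := by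
  have hmove := prefixDegree_sub_single_add_single hj i
  refine ⟨?_, fun t => ?_⟩
  · have := hmove n
    simp only [i.isLt, j.isLt, if_true] at this
    have := h.1
    omega
  · have key := hmove t
    have := h.2 t
    by_cases hit : (i : ℕ) < t ∧ t ≤ j
    · have := hstrict t hit.1 hit.2
      split_ifs at key <;> omega
    · split_ifs at key <;> omega

theorem exists_prefixDegree_lt_on_Icc {A B : Fin n →₀ ℕ}
    (hdeg : prefixDegree n A = prefixDegree n B) {s : ℕ}
    (hs : prefixDegree s A < prefixDegree s B) :
    ∃ j : Fin n, s ≤ j ∧ B j < A j ∧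
      ∀ t, s ≤ t → t ≤ j → prefixDegree t A < prefixDegree t B := by
  classical
  have hsn : s < n := lt_of_not_ge fun hns => by
    rw [prefixDegree_of_le A hns, prefixDegree_of_le B hns, hdeg] at hs
    exact hs.false
  have hex : ∃ e, s < e ∧ prefixDegree e B ≤ prefixDegree e A := ⟨n, hsn, hdeg.ge⟩
  obtain ⟨hse, he⟩ := Nat.find_spec hex
  have hen : Nat.find hex ≤ n := Nat.find_min' hex ⟨hsn, hdeg.ge⟩
  have hstrict : ∀ t, s ≤ t → t < Nat.find hex → prefixDegree t A < prefixDegree t B := by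
    intro t hst hte
    rcases hst.eq_or_lt with rfl | hst
    · exact hs
    · exact lt_of_not_ge fun h => Nat.find_min hex hte ⟨hst, h⟩
  have hj : Nat.find hex - 1 < n := by omega
  refine ⟨⟨_, hj⟩, Nat.le_sub_one_of_lt hse, ?_,
    fun t hst htj => hstrict t hst (by simp only at htj; omega)⟩
  have hA := prefixDegree_succ A hj
  have hB := prefixDegree_succ B hj
  rw [Nat.sub_add_cancel (by omega)] at hA hB
  have := hstrict _ (Nat.le_sub_one_of_lt hse) (by omega)
  omega

theorem exists_apply_pos_of_prefixDegree_lt {m : Fin n →₀ ℕ} {a b : ℕ}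
    (h : prefixDegree a m < prefixDegree b m) : ∃ r : Fin n, a ≤ r ∧ r < b ∧ 0 < m r := by
  by_contra! hc
  simp only [prefixDegree_apply] at h
  refine h.not_ge (Finset.sum_le_sum fun r _ => ?_)
  have := hc r
  split_ifs <;> omega

theorem exists_prefixDegree_lt_on_Ioc {A m : Fin n →₀ ℕ} {j : ℕ}
    (hj : prefixDegree j A < prefixDegree j m) :
    ∃ i : Fin n, i < j ∧ 0 < m i ∧
      ∀ t : ℕ, i < t → t ≤ j → prefixDegree t A < prefixDegree t m := by
  classical
  set i₀ := Nat.findGreatest (fun t => prefixDegree t m ≤ prefixDegree t A) j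
  have hi₀ : prefixDegree i₀ m ≤ prefixDegree i₀ A :=
    Nat.findGreatest_spec (P := fun t => prefixDegree t m ≤ prefixDegree t A) (Nat.zero_le j)
      (by simp only [prefixDegree_zero, le_refl])
  have hstrict : ∀ t, i₀ < t → t ≤ j → prefixDegree t A < prefixDegree t m :=
    fun t h₁ h₂ => lt_of_not_ge
      (Nat.findGreatest_is_greatest (P := fun t => prefixDegree t m ≤ prefixDegree t A) h₁ h₂)
  have hi₀j : i₀ < j := (Nat.findGreatest_le j).lt_of_ne fun h : i₀ = j => by
    rw [h] at hi₀
    exact hi₀.not_gt hj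
  have hA := prefixDegree_mono A hi₀j.le
  obtain ⟨i, hi₀i, hij, hi⟩ := exists_apply_pos_of_prefixDegree_lt (m := m) (a := i₀) (b := j)
    (by omega)
  exact ⟨i, hij, hi, fun t h₁ h₂ => hstrict t (by omega) h₂⟩

end PrefixDominates

section BorelStep

variable {n : ℕ}

theorem borelStep_iff {m m' : Fin n →₀ ℕ} :
    BorelStep n m m' ↔ ∃ i j : Fin n, i < j ∧ 0 < m j ∧ m' = m - single j 1 + single i 1 := by
  refine exists₂_congr fun i j => and_congr_right fun _ => and_congr_right fun hj => ?_
  rw [tsub_add_eq_add_tsub (single_le_iff.mpr hj)]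
  exact ⟨eq_tsub_of_add_eq,
    fun h => h ▸ tsub_add_cancel_of_le (le_add_right (single_le_iff.mpr hj))⟩

theorem BorelStep.ne {m m' : Fin n →₀ ℕ} (h : BorelStep n m m') : m ≠ m' := by
  rintro rfl
  obtain ⟨i, j, hij, -, h⟩ := h
  exact hij.ne ((single_left_inj one_ne_zero).mp (add_left_cancel h)).symm

theorem BorelStep.prefixDominates {m m' : Fin n →₀ ℕ} (h : BorelStep n m m') :
    PrefixDominates m m' := by
  obtain ⟨i, j, hij, hj, rfl⟩ := borelStep_iff.mp h
  exact (PrefixDominates.refl m).sub_single_add_single hj fun t h₁ h₂ => by omega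

theorem prefixDominates_of_mem_borelSet {A B : Fin n →₀ ℕ} (h : B ∈ BorelSet n A) :
    PrefixDominates A B := by
  induction h with
  | refl => exact .refl A
  | tail _ hstep ih => exact ih.trans hstep.prefixDominates

theorem PrefixDominates.exists_borelStep {A B : Fin n →₀ ℕ} (h : PrefixDominates A B)
    (hne : A ≠ B) : ∃ A', BorelStep n A A' ∧ PrefixDominates A' B := by
  obtain ⟨s, -, hs⟩ := h.exists_prefixDegree_lt hne
  have hs₀ : 0 < s := Nat.pos_of_ne_zero fun h₀ => by simp [h₀, prefixDegree_zero] at hs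
  obtain ⟨j, hsj, hj, hstrict⟩ := exists_prefixDegree_lt_on_Icc h.1 hs
  let i : Fin n := ⟨s - 1, by omega⟩
  have hij : i < j := by simp only [i, Fin.lt_def]; omega
  exact ⟨_, borelStep_iff.mpr ⟨i, j, hij, by omega, rfl⟩,
    h.sub_single_add_single_left (by omega)
      fun t h₁ h₂ => hstrict t (by simp only [i] at h₁; omega) h₂⟩

theorem PrefixDominates.mem_borelSet {A B : Fin n →₀ ℕ} (h : PrefixDominates A B) :
    B ∈ BorelSet n A := by
  by_cases hAB : A = B
  · exact hAB ▸ Relation.ReflTransGen.refl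
  obtain ⟨A', hstep, hA'⟩ := h.exists_borelStep hAB
  exact Relation.ReflTransGen.head hstep hA'.mem_borelSet
termination_by ∑ t ∈ Finset.range n, (prefixDegree t B - prefixDegree t A)
decreasing_by
  obtain ⟨s, hsn, hs⟩ := hstep.prefixDominates.exists_prefixDegree_lt hstep.ne
  refine Finset.sum_lt_sum (fun t _ => ?_) ⟨s, Finset.mem_range.mpr hsn, ?_⟩
  · have := hstep.prefixDominates.2 t
    omega
  · have := hA'.2 s
    omega

end BorelStep

theorem prefixDegree_nsmul_lt_sum {n k t : ℕ} {M : Fin n →₀ ℕ} {f : Fin k → Fin n →₀ ℕ}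
    (hle : ∀ ℓ, prefixDegree t M ≤ prefixDegree t (f ℓ)) {ℓ : Fin k}
    (hlt : prefixDegree t M < prefixDegree t (f ℓ)) :
    prefixDegree t (k • M) < prefixDegree t (∑ ℓ, f ℓ) := by
  have hconst : prefixDegree t (k • M) = ∑ _ℓ : Fin k, prefixDegree t M := by simp
  rw [hconst, map_sum]
  exact Finset.sum_lt_sum (fun ℓ _ => hle ℓ) ⟨ℓ, Finset.mem_univ ℓ, hlt⟩

theorem add_single_le {n : ℕ} {m μ : Fin n →₀ ℕ} {j : Fin n} (hm : m ≤ μ) (hj : m j < μ j) :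
    m + single j 1 ≤ μ := fun r => by
  rcases eq_or_ne r j with rfl | hr
  · simpa using hj
  · simpa [single_apply, hr.symm] using hm r

theorem borel_factorization_improve_general {n : ℕ} (M μ P P' : Fin n →₀ ℕ) (k : ℕ)
    (hP : P ∈ BorelSet n (k • M)) (hPdvd : P ≤ μ)
    (hPmin : ∀ m ∈ BorelSet n (k • M), m ≤ μ → m ∈ BorelSet n P)
    (hP' : P' ∈ BorelSet n (k • M)) (hP'dvd : P' ≤ μ) (hne : P' ≠ P)
    (f : Fin k → (Fin n →₀ ℕ)) (hf : ∀ ℓ : Fin k, f ℓ ∈ BorelSet n M)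
    (hsum : ∑ ℓ, f ℓ = P') :
    ∃ (i j : Fin n) (ℓ : Fin k), i < j ∧ 0 < f ℓ i ∧
      f ℓ - Finsupp.single i 1 + Finsupp.single j 1 ∈ BorelSet n M ∧
      P' - Finsupp.single i 1 + Finsupp.single j 1 ≤ μ ∧
      P' - Finsupp.single i 1 + Finsupp.single j 1 ∈ BorelSet n (k • M) := by
  have hMf (ℓ : Fin k) : PrefixDominates M (f ℓ) := prefixDominates_of_mem_borelSet (hf ℓ)
  have hPP' : PrefixDominates P P' := prefixDominates_of_mem_borelSet (hPmin P' hP' hP'dvd)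
  obtain ⟨s, -, hs⟩ := hPP'.exists_prefixDegree_lt hne.symm
  obtain ⟨j, hsj, hP'j, hj⟩ := exists_prefixDegree_lt_on_Icc hPP'.1 hs
  obtain ⟨ℓ, -, hℓ⟩ : ∃ ℓ ∈ Finset.univ, prefixDegree j M < prefixDegree j (f ℓ) := by
    refine Finset.exists_lt_of_sum_lt ?_
    calc ∑ _ℓ : Fin k, prefixDegree j M = prefixDegree j (k • M) := by simp
      _ ≤ prefixDegree j P := (prefixDominates_of_mem_borelSet hP).2 j
      _ < prefixDegree j P' := hj j hsj le_rfl
      _ = ∑ ℓ, prefixDegree j (f ℓ) := by rw [← hsum, map_sum]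
  obtain ⟨i, hij, hi, hstrict⟩ := exists_prefixDegree_lt_on_Ioc hℓ
  have hfP' : f ℓ ≤ P' := hsum ▸ Finset.single_le_sum (fun _ _ => zero_le) (Finset.mem_univ ℓ)
  refine ⟨i, j, ℓ, hij, hi, ((hMf ℓ).sub_single_add_single hi hstrict).mem_borelSet,
    (add_le_add_left tsub_le_self _).trans (add_single_le hP'dvd (hP'j.trans_le (hPdvd j))), ?_⟩
  refine ((prefixDominates_of_mem_borelSet hP').sub_single_add_single (hi.trans_le (hfP' i))
    fun t h₁ h₂ => ?_).mem_borelSet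
  rw [← hsum]
  exact prefixDegree_nsmul_lt_sum (fun ℓ => (hMf ℓ).2 t) (hstrict t h₁ h₂)

/-- Lemma 3.10: let `P` be the unique Borel-minimal monomial of `Borel(M^k)` dividing `μ`.
If `P' ∈ Borel(M^k)` divides `μ`, `P' ≠ P`, and `P' = P'_1 ⋯ P'_k` with each
`P'_ℓ ∈ Borel(M)`, then there are `i < j` and `ℓ` with `x_i ∣ P'_ℓ`,
`(x_j/x_i)·P'_ℓ ∈ Borel(M)`, `(x_j/x_i)·P'` divides `μ`, and `(x_j/x_i)·P' ∈ Borel(M^k)`. -/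
theorem borel_factorization_improve {n : ℕ} (M μ P P' : Fin n →₀ ℕ) (k : ℕ) (hk : 1 ≤ k)
    (hP : P ∈ BorelSet n (k • M)) (hPdvd : P ≤ μ)
    (hPmin : ∀ m ∈ BorelSet n (k • M), m ≤ μ → m ∈ BorelSet n P)
    (hP' : P' ∈ BorelSet n (k • M)) (hP'dvd : P' ≤ μ) (hne : P' ≠ P)
    (f : Fin k → (Fin n →₀ ℕ)) (hf : ∀ ℓ : Fin k, f ℓ ∈ BorelSet n M)
    (hsum : ∑ ℓ, f ℓ = P') :
    ∃ (i j : Fin n) (ℓ : Fin k), i < j ∧ 0 < f ℓ i ∧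
      f ℓ - Finsupp.single i 1 + Finsupp.single j 1 ∈ BorelSet n M ∧
      P' - Finsupp.single i 1 + Finsupp.single j 1 ≤ μ ∧
      P' - Finsupp.single i 1 + Finsupp.single j 1 ∈ BorelSet n (k • M) :=
  borel_factorization_improve_general M μ P P' k hP hPdvd hPmin hP' hP'dvd hne f hf hsum
end

section
/- Let M and μ be monomials in K[x_1,…,x_n] with μ ∈ Borel(M^k) for an integer k ≥ 1. Let x_s be the variable of largest index dividing μ, assume s > 1, let A be the exponent of x_s in μ, and write A = qk + r with q ∈ ℤ_{≥0} and 0 ≤ r < k. Then there exists a monomial γ ∈ Borel(M) such that (1) no variable x_i with i > s divides γ, (2) the exponent of x_s in γ equals q if r = 0 and equals q + 1 if r > 0, and (3) every monomial δ ∈ Borel(M) satisfying (1) and (2) lies in Borel(γ); in particular γ is the unique minimal monomial of Borel(M), under the Borel order, satisfying (1) and (2). -/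
/-- `sig n m t = ∑_{j ≥ t} m j`. -/
def sig (n : ℕ) (m : Fin n →₀ ℕ) (t : ℕ) : ℕ :=
  ∑ j : Fin n, if t ≤ j.val then m j else 0

lemma sig_add {n : ℕ} (m m' : Fin n →₀ ℕ) (t : ℕ) :
    sig n (m + m') t = sig n m t + sig n m' t := by
  unfold sig
  rw [← Finset.sum_add_distrib]
  refine Finset.sum_congr rfl fun j _ => ?_
  simp only [Finsupp.add_apply]
  split_ifs <;> omega

lemma sig_single {n : ℕ} (j : Fin n) (a t : ℕ) :
    sig n (Finsupp.single j a) t = if t ≤ j.val then a else 0 := by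
  unfold sig
  rw [Finset.sum_eq_single j]
  · simp
  · intro b _ hb
    simp [Finsupp.single_apply, (Ne.symm hb)]
  · simp

lemma sig_smul {n : ℕ} (k : ℕ) (m : Fin n →₀ ℕ) (t : ℕ) :
    sig n (k • m) t = k * sig n m t := by
  unfold sig
  rw [Finset.mul_sum]
  refine Finset.sum_congr rfl fun j _ => ?_
  simp only [Finsupp.smul_apply, smul_eq_mul]
  split_ifs <;> simp

lemma sig_eq_zero_of_zero {n : ℕ} (m : Fin n →₀ ℕ) {t : ℕ}
    (h : ∀ i : Fin n, t ≤ i.val → m i = 0) : sig n m t = 0 := by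
  unfold sig
  refine Finset.sum_eq_zero fun j _ => ?_
  split_ifs with hj
  · exact h j hj
  · rfl

lemma sig_zero_of_ge {n : ℕ} (m : Fin n →₀ ℕ) {t : ℕ} (h : n ≤ t) : sig n m t = 0 :=
  sig_eq_zero_of_zero m fun i hi => absurd (lt_of_lt_of_le i.isLt (le_trans h hi)) (lt_irrefl _)

lemma sig_succ {n : ℕ} (m : Fin n →₀ ℕ) {t : ℕ} (ht : t < n) :
    sig n m t = m ⟨t, ht⟩ + sig n m (t + 1) := by
  unfold sig
  have key : ∀ j : Fin n, (if t ≤ j.val then m j else 0)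
      = (if j = ⟨t, ht⟩ then m j else 0) + (if t + 1 ≤ j.val then m j else 0) := by
    intro j
    simp only [Fin.ext_iff]
    split_ifs <;> omega
  rw [Finset.sum_congr rfl fun j _ => key j, Finset.sum_add_distrib,
    Finset.sum_ite_eq' Finset.univ (⟨t, ht⟩ : Fin n) m]
  simp

lemma sig_antitone {n : ℕ} (m : Fin n →₀ ℕ) (t : ℕ) : sig n m (t + 1) ≤ sig n m t := by
  refine Finset.sum_le_sum fun j _ => ?_
  split_ifs <;> omega
lemma sig_ext {n : ℕ} {m m' : Fin n →₀ ℕ} (h : ∀ t, sig n m t = sig n m' t) : m = m' := by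
  ext j
  have h1 := sig_succ m j.isLt
  have h2 := sig_succ m' j.isLt
  have h3 := h j.val
  have h4 := h (j.val + 1)
  simp only [Fin.eta] at h1 h2
  omega

/-- Forward direction: membership in the Borel set gives σ-domination. -/
lemma sig_le_of_mem {n : ℕ} {M m : Fin n →₀ ℕ} (h : m ∈ BorelSet n M) :
    sig n m 0 = sig n M 0 ∧ ∀ t, sig n m t ≤ sig n M t := by
  induction h with
  | refl => exact ⟨rfl, fun t => le_refl _⟩
  | @tail b c _ hstep ih =>
    obtain ⟨i, j, hij, _, heq⟩ := hstep
    have key : ∀ t, sig n c t + (if t ≤ j.val then 1 else 0)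
        = sig n b t + (if t ≤ i.val then 1 else 0) := by
      intro t
      have := congrArg (fun x => sig n x t) heq
      simpa [sig_add, sig_single] using this
    have hlt : i.val < j.val := hij
    constructor
    · have := key 0
      have h0 := ih.1
      simp at this
      omega
    · intro t
      have := key t
      have h2 := ih.2 t
      split_ifs at this <;> omega
/-- Backward direction: σ-domination implies Borel membership. -/
lemma mem_of_sig_le_aux {n : ℕ} : ∀ (D : ℕ) (M m : Fin n →₀ ℕ),
    (∑ t ∈ Finset.range n, (sig n M t - sig n m t)) ≤ D →
    sig n m 0 = sig n M 0 → (∀ t, sig n m t ≤ sig n M t) → m ∈ BorelSet n M := by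
  intro D
  induction D with
  | zero =>
    intro M m hD h0 h
    have : m = M := by
      apply sig_ext
      intro t
      rcases le_or_gt n t with ht | ht
      · rw [sig_zero_of_ge m ht, sig_zero_of_ge M ht]
      · have h1 : sig n M t - sig n m t = 0 := by
          have := Finset.sum_eq_zero_iff.mp (Nat.le_zero.mp hD) t (Finset.mem_range.mpr ht)
          exact this
        have := h t
        omega
    rw [this]
    exact Relation.ReflTransGen.refl
  | succ D ih =>
    intro M m hD h0 h
    by_cases hall : ∀ t, sig n m t = sig n M t
    · have : m = M := sig_ext hall
      rw [this]; exact Relation.ReflTransGen.refl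
    push_neg at hall
    obtain ⟨t0, ht0⟩ := hall
    -- the finset of indices where strict inequality holds
    set T : Finset ℕ := (Finset.range n).filter (fun t => sig n m t < sig n M t) with hT
    have hTne : T.Nonempty := by
      refine ⟨t0, Finset.mem_filter.mpr ⟨Finset.mem_range.mpr ?_, ?_⟩⟩ <;>
      · by_contra hc
        push_neg at hc
        first
          | exact ht0 (by rw [sig_zero_of_ge m hc, sig_zero_of_ge M hc])
          | exact ht0 (le_antisymm (h t0) hc)
    set t := T.max' hTne with htdef
    have htmem : t ∈ T := T.max'_mem hTne
    have htn : t < n := Finset.mem_range.mp (Finset.mem_filter.mp htmem).1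
    have htlt : sig n m t < sig n M t := (Finset.mem_filter.mp htmem).2
    have htmax : ∀ u, t < u → sig n m u = sig n M u := by
      intro u hu
      rcases le_or_gt n u with hun | hun
      · rw [sig_zero_of_ge m hun, sig_zero_of_ge M hun]
      · by_contra hc
        have : u ∈ T := Finset.mem_filter.mpr ⟨Finset.mem_range.mpr hun,
          lt_of_le_of_ne (h u) hc⟩
        exact absurd (T.le_max' u this) (by omega)
    have htpos : 0 < t := by
      rcases Nat.eq_zero_or_pos t with h' | h'
      · rw [h'] at htlt; omega
      · exact h'
    -- M has positive exponent at t
    have hMt : 0 < M ⟨t, htn⟩ := by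
      have h1 := sig_succ M htn
      have h2 := htmax (t + 1) (by omega)
      have h3 := sig_antitone m t
      omega
    -- find the minimal left end u0 of the strict-inequality interval ending at t
    set U : Finset ℕ := (Finset.range (t + 1)).filter
      (fun u => ∀ v, u ≤ v → v ≤ t → sig n m v < sig n M v) with hU
    have hUne : U.Nonempty := by
      refine ⟨t, Finset.mem_filter.mpr ⟨Finset.mem_range.mpr (by omega), ?_⟩⟩
      intro v hv1 hv2
      have : v = t := le_antisymm hv2 hv1
      rw [this]; exact htlt
    set u0 := U.min' hUne with hu0def
    have hu0mem : u0 ∈ U := U.min'_mem hUne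
    have hu0le : u0 ≤ t := by
      have := Finset.mem_range.mp (Finset.mem_filter.mp hu0mem).1; omega
    have hu0prop : ∀ v, u0 ≤ v → v ≤ t → sig n m v < sig n M v :=
      (Finset.mem_filter.mp hu0mem).2
    have hu0pos : 0 < u0 := by
      rcases Nat.eq_zero_or_pos u0 with h' | h'
      · have := hu0prop 0 (by omega) (by omega)
        omega
      · exact h'
    -- perform the Borel move x_t → x_{u0 - 1}
    have hin : u0 - 1 < n := by omega
    set ji : Fin n := ⟨u0 - 1, hin⟩ with hji
    set jt : Fin n := ⟨t, htn⟩ with hjt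
    set M1 : Fin n →₀ ℕ := (M - Finsupp.single jt 1) + Finsupp.single ji 1 with hM1
    have heq : M1 + Finsupp.single jt 1 = M + Finsupp.single ji 1 := by
      ext a
      simp only [hM1, Finsupp.add_apply, Finsupp.tsub_apply, Finsupp.single_apply]
      by_cases h1 : jt = a
      · subst h1
        split_ifs <;> omega
      · split_ifs <;> omega
    have hstep : BorelStep n M M1 := ⟨ji, jt, by simp [hji, hjt, Fin.lt_def]; omega, hMt, heq⟩
    have hsigM1 : ∀ v, sig n M1 v + (if v ≤ t then 1 else 0)
        = sig n M v + (if v ≤ u0 - 1 then 1 else 0) := by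
      intro v
      have := congrArg (fun x => sig n x v) heq
      simpa [sig_add, sig_single, hji, hjt] using this
    have hle : ∀ v, sig n m v ≤ sig n M1 v := by
      intro v
      have h1 := hsigM1 v
      rcases le_or_gt v (u0 - 1) with hv | hv
      · have := h v; split_ifs at h1 <;> omega
      rcases le_or_gt v t with hv2 | hv2
      · have := hu0prop v (by omega) hv2
        split_ifs at h1 <;> omega
      · have := h v; split_ifs at h1 <;> omega
    have h0' : sig n m 0 = sig n M1 0 := by
      have h1 := hsigM1 0
      split_ifs at h1 <;> omega
    have hD' : (∑ v ∈ Finset.range n, (sig n M1 v - sig n m v)) ≤ D := by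
      have hlt2 : (∑ v ∈ Finset.range n, (sig n M1 v - sig n m v))
          < ∑ v ∈ Finset.range n, (sig n M v - sig n m v) := by
        apply Finset.sum_lt_sum
        · intro v _
          have h1 := hsigM1 v
          split_ifs at h1 <;> omega
        · refine ⟨t, Finset.mem_range.mpr htn, ?_⟩
          have h1 := hsigM1 t
          have h2 := hle t
          split_ifs at h1 <;> omega
      omega
    exact Relation.ReflTransGen.head hstep (ih M1 m hD' h0' hle)

lemma mem_of_sig_le {n : ℕ} {M m : Fin n →₀ ℕ}
    (h0 : sig n m 0 = sig n M 0) (h : ∀ t, sig n m t ≤ sig n M t) : m ∈ BorelSet n M :=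
  mem_of_sig_le_aux _ M m (le_refl _) h0 h
/-- Construct a monomial with prescribed σ-values. -/
lemma sig_mk {n : ℕ} (f : ℕ → ℕ) (hf : ∀ t, f (t + 1) ≤ f t) (hfn : f n = 0) :
    ∀ t, sig n (Finsupp.equivFunOnFinite.symm (fun j : Fin n => f j.val - f (j.val + 1))) t
      = f t := by
  set γ := Finsupp.equivFunOnFinite.symm (fun j : Fin n => f j.val - f (j.val + 1)) with hγ
  have hγapp : ∀ j : Fin n, γ j = f j.val - f (j.val + 1) := by
    intro j; simp [hγ]
  have hfzero : ∀ t, n ≤ t → f t = 0 := by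
    intro t ht
    induction t with
    | zero =>
      obtain rfl : n = 0 := Nat.le_zero.mp ht
      exact hfn
    | succ t ih =>
      rcases le_or_gt n t with h' | h'
      · have := hf t; have := ih h'; omega
      · have : t + 1 = n := by omega
        rw [this, hfn]
  have key : ∀ d t, n ≤ t + d → sig n γ t = f t := by
    intro d
    induction d with
    | zero =>
      intro t ht
      rw [sig_zero_of_ge γ (by omega), hfzero t (by omega)]
    | succ d ih =>
      intro t ht
      rcases le_or_gt n t with h' | h'
      · rw [sig_zero_of_ge γ h', hfzero t h']
      · rw [sig_succ γ h', ih (t + 1) (by omega), hγapp]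
        show f t - f (t + 1) + f (t + 1) = f t
        have := hf t
        omega
  intro t
  exact key n t (by omega)

/-- Lemma 4.6: suppose `μ ∈ Borel(M^k)`, `x_s` is the variable of largest index dividing
`μ`, `s > 1` (in 1-based indexing; here `0 < s.val`), the exponent of `x_s` in `μ` is
`A = q·k + r` with `0 ≤ r < k`.  Then there is a unique Borel-minimal `γ ∈ Borel(M)`
such that no variable of index `> s` divides `γ` and the exponent of `x_s` in `γ` is `q`
(if `r = 0`) or `q + 1` (if `r > 0`): every `δ ∈ Borel(M)` with these two properties
lies in `Borel(γ)`. -/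
theorem borel_min_up_down_exists {n : ℕ} (M μ : Fin n →₀ ℕ) (k : ℕ) (hk : 1 ≤ k)
    (hμ : μ ∈ BorelSet n (k • M)) (s : Fin n) (hs1 : 0 < s.val)
    (hsdvd : 0 < μ s) (hsmax : ∀ i : Fin n, s < i → μ i = 0)
    (q r : ℕ) (hA : μ s = q * k + r) (hr : r < k) :
    ∃ γ ∈ BorelSet n M,
      (∀ i : Fin n, s < i → γ i = 0) ∧
      γ s = (if r = 0 then q else q + 1) ∧
      ∀ δ ∈ BorelSet n M, (∀ i : Fin n, s < i → δ i = 0) →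
        δ s = (if r = 0 then q else q + 1) → δ ∈ BorelSet n γ := by
  set c : ℕ := if r = 0 then q else q + 1 with hc
  -- the exponent bound c ≤ σ_s(M)
  have hμs : sig n μ s.val = μ s := by
    rw [sig_succ μ s.isLt, Fin.eta,
      sig_eq_zero_of_zero μ (fun i hi => hsmax i (by rw [Fin.lt_def]; omega))]
    omega
  have hsigle : sig n μ s.val ≤ k * sig n M s.val := by
    have := (sig_le_of_mem hμ).2 s.val
    rwa [sig_smul] at this
  have hcle : c ≤ sig n M s.val := by
    rw [hμs, hA] at hsigle
    rcases Nat.eq_zero_or_pos r with hr0 | hr0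
    · rw [hc, if_pos hr0]
      subst hr0
      have h' : k * q ≤ k * sig n M s.val := by rw [mul_comm k q]; omega
      exact Nat.le_of_mul_le_mul_left h' (by omega)
    · rw [hc, if_neg (by omega)]
      have h' : k * q < k * sig n M s.val := by rw [mul_comm k q]; omega
      exact Nat.lt_of_mul_lt_mul_left h' 
  -- construct γ via its σ-values
  set f : ℕ → ℕ := fun t => if t < s.val then sig n M t else if t = s.val then c else 0
    with hf
  have hfstep : ∀ t, f (t + 1) ≤ f t := by
    intro t
    have h1 := sig_antitone M t
    simp only [hf]
    rcases lt_trichotomy (t + 1) s.val with h | h | h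
    · rw [if_pos h, if_pos (by omega)]
      exact h1
    · rw [if_neg (by omega), if_pos h, if_pos (by omega)]
      rw [← h] at hcle
      exact le_trans hcle h1
    · rw [if_neg (by omega), if_neg (by omega)]
      exact Nat.zero_le _
  have hfn : f n = 0 := by
    simp only [hf]
    have := s.isLt
    rw [if_neg (by omega), if_neg (by omega)]
  set γ := Finsupp.equivFunOnFinite.symm (fun j : Fin n => f j.val - f (j.val + 1)) with hγ
  have hγapp : ∀ j : Fin n, γ j = f j.val - f (j.val + 1) := by
    intro j; simp [hγ]
  have hsig : ∀ t, sig n γ t = f t := sig_mk f hfstep hfn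
  have hf0 : f 0 = sig n M 0 := by simp only [hf]; rw [if_pos hs1]
  have hγmem : γ ∈ BorelSet n M := by
    apply mem_of_sig_le
    · rw [hsig 0, hf0]
    · intro t
      rw [hsig t]
      simp only [hf]
      split_ifs with h1 h2
      · exact le_refl _
      · rw [← h2] at hcle; exact hcle
      · exact Nat.zero_le _
  have hγhigh : ∀ i : Fin n, s < i → γ i = 0 := by
    intro i hi
    rw [Fin.lt_def] at hi
    rw [hγapp i]
    simp only [hf]
    split_ifs <;> omega
  have hγs : γ s = c := by
    rw [hγapp s]
    simp only [hf]
    split_ifs <;> omega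
  refine ⟨γ, hγmem, hγhigh, hγs, ?_⟩
  intro δ hδ hδhigh hδs
  have hδle := sig_le_of_mem hδ
  apply mem_of_sig_le
  · rw [hδle.1, hsig 0, hf0]
  · intro t
    rw [hsig t]
    simp only [hf]
    split_ifs with h1 h2
    · exact hδle.2 t
    · subst h2
      rw [sig_succ δ s.isLt, Fin.eta,
        sig_eq_zero_of_zero δ (fun i hi => hδhigh i (by rw [Fin.lt_def]; omega))]
      rw [hδs]
      omega
    · rw [sig_eq_zero_of_zero δ (fun i hi => hδhigh i (by rw [Fin.lt_def]; omega))]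
end

section
/- Let M be a monomial in K[x_1,…,x_n] and I the principal Borel ideal generated by Borel(M). Then the toric ring K[I], the K-subalgebra of K[x_1,…,x_n] generated by the monomials of Borel(M), and the Rees algebra R[It], the K-subalgebra of K[x_1,…,x_n,t] generated by x_1,…,x_n together with all m·t for m ∈ Borel(M), are normal domains: each is an integral domain that is integrally closed in its field of fractions. -/
/-!
Prefix sums `ψ_j(u) = u_0 + ⋯ + u_{j-1}` turn Borel moves into the dominance order:
`m ∈ Borel(M)` iff `deg m = deg M` and `ψ_j M ≤ ψ_j m` for all `j`. Peeling off one element of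
`Borel(M)` at a time (the one whose prefix sums are `⌊ψ_j u / k⌋`, capped at `deg M`) shows that the
exponent monoids of `K[I]` and `R[It]` are exactly the lattice points cut out by finitely many
linear inequalities (and, for `K[I]`, the divisibility `deg M ∣ deg u`), so both are normal monoids.

Normality passes from an exponent monoid `S` to `K[S]`: if `h ∈ K[x]` is integral over `K[S]` and
`h * b ∈ K[S]` for some `b ≠ 0` in `K[S]`, then for any monomial order the leading exponent `u` of
`h` satisfies `u + v ∈ S` (with `v` the leading exponent of `b`) and `N • u ∈ S + W` for all `N` and
a fixed finite `W`, which forces `u ∈ S`; removing the leading term and inducting gives `h ∈ K[S]`.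
As `K[x]` is integrally closed, this makes `K[S]` integrally closed.
-/

open MvPolynomial Pointwise

universe u

section NormalExponents

variable {A : Type*} [AddCommMonoid A]

/-- For an affine monoid `S` this is normality: `u = (u + v) - v` lies in the group generated by
`S`, and `k • u + s ∈ S` for infinitely many `k` puts `u` in the cone spanned by `S`. -/
def IsNormalExponents (S : Set A) : Prop :=
  ∀ ⦃u v s : A⦄, v ∈ S → u + v ∈ S → s ∈ S → {k : ℕ | k • u + s ∈ S}.Infinite → u ∈ S

theorem IsNormalExponents.inter {S T : Set A} (hS : IsNormalExponents S)
    (hT : IsNormalExponents T) : IsNormalExponents (S ∩ T) :=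
  fun _ _ _ hv huv hs hk => ⟨hS hv.1 huv.1 hs.1 (hk.mono fun _ h => h.1),
    hT hv.2 huv.2 hs.2 (hk.mono fun _ h => h.2)⟩

theorem isNormalExponents_setOf_dvd (d : ℕ) (ℓ : A →+ ℕ) :
    IsNormalExponents {a | d ∣ ℓ a} := by
  intro u v _ hv huv _ _
  simp only [Set.mem_ofPred_eq, map_add] at hv huv ⊢
  exact (Nat.dvd_add_left hv).mp huv

theorem Nat.le_of_infinite_setOf_mul_le_mul_add {a b c : ℕ}
    (h : {k : ℕ | k * a ≤ k * b + c}.Infinite) : a ≤ b := by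
  obtain ⟨k, hk, hck⟩ := h.exists_gt c
  by_contra! hba
  have : k * (b + 1) ≤ k * a := Nat.mul_le_mul_left k hba
  simp only [Set.mem_ofPred_eq] at hk
  nlinarith

theorem isNormalExponents_setOf_forall_le {ι : Type*} (φ ψ : ι → A →+ ℕ) :
    IsNormalExponents {a | ∀ i, φ i a ≤ ψ i a} := by
  intro u _ s _ _ _ hk i
  refine Nat.le_of_infinite_setOf_mul_le_mul_add (c := ψ i s) (hk.mono fun k hk => ?_)
  have := hk i
  simp only [map_add, map_nsmul, smul_eq_mul] at this
  simp only [Set.mem_ofPred_eq]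
  omega

theorem exists_infinite_setOf_nsmul_add_mem {A : Type*} [AddCommMonoid A] [IsRightCancelAdd A]
    {S W : Set A} (hW : W.Finite) {u : A} (hu : ∀ N : ℕ, N • u ∈ S + W) :
    ∃ s ∈ S, {k : ℕ | k • u + s ∈ S}.Infinite := by
  choose s hs t ht hst using fun N => Set.mem_add.mp (hu N)
  have := hW.to_subtype
  obtain ⟨t₀, hfiber⟩ := Finite.exists_infinite_fiber fun N => (⟨t N, ht N⟩ : W)
  have hI : {N | t N = t₀}.Infinite := by
    simpa [Set.infinite_coe_iff, Set.preimage, Subtype.ext_iff] using hfiber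
  obtain ⟨N₁, hN₁⟩ := hI.nonempty
  refine ⟨s N₁, hs N₁, Set.infinite_of_forall_exists_gt fun C => ?_⟩
  obtain ⟨N₂, hN₂, hlt⟩ := hI.exists_gt (C + N₁)
  refine ⟨N₂ - N₁, ?_, by omega⟩
  have : (N₂ - N₁) • u + s N₁ + t N₁ = s N₂ + t N₂ := by
    rw [add_assoc, hst, ← add_nsmul, Nat.sub_add_cancel (by omega), hst]
  rw [Set.mem_ofPred_eq, add_right_cancel (this.trans (by rw [hN₂, hN₁]))]
  exact hs N₂

end NormalExponents

theorem MonomialOrder.nonempty (σ : Type u) : Nonempty (MonomialOrder.{u, u} σ) := by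
  let : LinearOrder σ := IsWellOrder.linearOrder WellOrderingRel
  have : WellFoundedLT σ := ⟨WellOrderingRel.isWellOrder.wf⟩
  exact ⟨(MonomialOrder.lex : MonomialOrder σᵒᵈ)⟩

theorem Subalgebra.isIntegrallyClosed_of_forall_isIntegral_mem {R A : Type*} [CommRing R]
    [CommRing A] [IsDomain A] [IsIntegrallyClosed A] [Algebra R A] (B : Subalgebra R A)
    (hB : ∀ ⦃b x : A⦄, b ∈ B → b ≠ 0 → x * b ∈ B → IsIntegral B x → x ∈ B) :
    IsIntegrallyClosed B := by
  have hinj : Function.Injective (algebraMap B (FractionRing A)) :=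
    (IsFractionRing.injective A (FractionRing A)).comp Subtype.val_injective
  let f : FractionRing B →ₐ[B] FractionRing A :=
    IsFractionRing.liftAlgHom (g := Algebra.ofId _ _) hinj
  rw [isIntegrallyClosed_iff (FractionRing B)]
  intro y hy
  obtain ⟨a, b, hb, rfl⟩ := IsFractionRing.div_surjective (A := B) y
  obtain ⟨x, hx⟩ := IsIntegrallyClosed.isIntegral_iff.mp ((hy.map f).tower_top (A := A))
  have hb0 : (b : A) ≠ 0 := fun h => nonZeroDivisors.ne_zero hb (Subtype.val_injective h)
  have hfy : f (algebraMap B _ a / algebraMap B _ b) = algebraMap A _ a / algebraMap A _ b := by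
    rw [map_div₀, f.commutes, f.commutes]
    rfl
  have hxb : x * b = a := by
    apply IsFractionRing.injective A (FractionRing A)
    rw [map_mul, hx, hfy, div_mul_cancel₀]
    exact (IsFractionRing.injective A (FractionRing A)).ne_iff' (map_zero _) |>.mpr hb0
  have hxB : x ∈ B := hB b.2 hb0 (hxb ▸ a.2) <| by
    rw [← isIntegral_algebraMap_iff (B := FractionRing A) (IsFractionRing.injective A _), hx]
    exact hy.map f
  exact ⟨⟨x, hxB⟩, f.injective ((f.commutes _).trans hx)⟩

namespace MvPolynomial

variable {σ : Type*}

section CommSemiring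

variable (R : Type*) [CommSemiring R]

noncomputable def monomialSubalgebra (S : AddSubmonoid (σ →₀ ℕ)) :
    Subalgebra R (MvPolynomial σ R) :=
  (restrictSupport R S).toSubalgebra
    ((monomial_mem_restrictSupport R).mpr (.inl S.zero_mem))
    (fun {x y} hx hy => by
      rw [← AddSubmonoid.coe_add_self_eq S, restrictSupport_add]
      exact Submodule.mul_mem_mul hx hy)

variable {R}

theorem mem_monomialSubalgebra {S : AddSubmonoid (σ →₀ ℕ)} {p : MvPolynomial σ R} :
    p ∈ monomialSubalgebra R S ↔ ↑p.support ⊆ (S : Set (σ →₀ ℕ)) :=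
  Iff.rfl

theorem monomial_mem_monomialSubalgebra {S : AddSubmonoid (σ →₀ ℕ)} {u : σ →₀ ℕ} (hu : u ∈ S)
    (c : R) : monomial u c ∈ monomialSubalgebra R S :=
  (monomial_mem_restrictSupport R).mpr (.inl hu)

theorem adjoin_monomial_image_eq (B : Set (σ →₀ ℕ)) :
    Algebra.adjoin R ((monomial · (1 : R)) '' B) =
      monomialSubalgebra R (AddSubmonoid.closure B) := by
  refine le_antisymm ?_ fun p hp => ?_
  · rw [Algebra.adjoin_le_iff, Set.image_subset_iff]
    exact fun u hu => monomial_mem_monomialSubalgebra (AddSubmonoid.subset_closure hu) 1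
  · have hspan : p ∈ Submodule.span R ((monomial · (1 : R)) '' AddSubmonoid.closure B) := by
      rw [← restrictSupport_eq_span]
      exact hp
    rw [← Subalgebra.mem_toSubmodule]
    refine Submodule.span_le.mpr ?_ hspan
    rintro _ ⟨u, hu, rfl⟩
    rw [SetLike.mem_coe, Subalgebra.mem_toSubmodule]
    induction hu using AddSubmonoid.closure_induction with
    | mem u hu => exact Algebra.subset_adjoin ⟨u, hu, rfl⟩
    | zero => exact Subalgebra.one_mem _
    | add u v _ _ hu hv =>
      simpa only [monomial_mul, one_mul] using Subalgebra.mul_mem _ hu hv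

theorem support_subset_add_of_mem_span {S : AddSubmonoid (σ →₀ ℕ)}
    {T : Set (MvPolynomial σ R)} {p : MvPolynomial σ R}
    (hp : p ∈ Submodule.span (monomialSubalgebra R S) T) :
    ↑p.support ⊆ (S : Set (σ →₀ ℕ)) + ⋃ t ∈ T, (t.support : Set (σ →₀ ℕ)) := by
  classical
  induction hp using Submodule.span_induction with
  | mem t ht =>
    exact fun u hu => Set.mem_add.mpr ⟨0, S.zero_mem, u, Set.mem_biUnion ht hu, zero_add u⟩
  | zero => simp
  | add p q _ _ hp hq =>
    exact (Finset.coe_subset.mpr support_add).trans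
      (by simpa only [Finset.coe_union] using Set.union_subset hp hq)
  | smul a p _ hp =>
    rw [Subalgebra.smul_def, smul_eq_mul]
    calc ((a * p : MvPolynomial σ R).support : Set (σ →₀ ℕ))
          ⊆ ((a : MvPolynomial σ R).support : Set (σ →₀ ℕ)) + ↑p.support := by
          exact_mod_cast support_mul _ _
      _ ⊆ (S : Set (σ →₀ ℕ)) + ((S : Set (σ →₀ ℕ)) + ⋃ t ∈ T, (t.support : Set (σ →₀ ℕ))) :=
          Set.add_subset_add a.2 hp
      _ = (S : Set (σ →₀ ℕ)) + ⋃ t ∈ T, (t.support : Set (σ →₀ ℕ)) := by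
          rw [← add_assoc, AddSubmonoid.coe_add_self_eq]

end CommSemiring

section CommRing

variable {R : Type*} [CommRing R]

theorem exists_finite_forall_support_pow_subset {S : AddSubmonoid (σ →₀ ℕ)}
    {h : MvPolynomial σ R} (hh : IsIntegral (monomialSubalgebra R S) h) :
    ∃ W : Set (σ →₀ ℕ), W.Finite ∧ ∀ N : ℕ, ↑(h ^ N).support ⊆ (S : Set (σ →₀ ℕ)) + W := by
  obtain ⟨T, hT⟩ := hh.fg_adjoin_singleton
  refine ⟨⋃ t ∈ (T : Set (MvPolynomial σ R)), (t.support : Set (σ →₀ ℕ)),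
    T.finite_toSet.biUnion fun t _ => t.support.finite_toSet,
    fun N => support_subset_add_of_mem_span ?_⟩
  rw [hT]
  exact Subalgebra.pow_mem _ (Algebra.self_mem_adjoin_singleton _ h) N

variable [IsDomain R]

theorem degree_mem_of_isIntegral (m : MonomialOrder σ) {S : AddSubmonoid (σ →₀ ℕ)}
    (hS : IsNormalExponents (S : Set (σ →₀ ℕ))) {b h : MvPolynomial σ R}
    (hb : b ∈ monomialSubalgebra R S) (hb0 : b ≠ 0) (hhb : h * b ∈ monomialSubalgebra R S)
    (hh : IsIntegral (monomialSubalgebra R S) h) (h0 : h ≠ 0) :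
    m.degree h ∈ S := by
  have hsum : m.degree h + m.degree b ∈ S := by
    rw [← m.degree_mul h0 hb0]
    exact mem_monomialSubalgebra.mp hhb (m.degree_mem_support (mul_ne_zero h0 hb0))
  obtain ⟨W, hW, hpow⟩ := exists_finite_forall_support_pow_subset hh
  have hnsmul (N : ℕ) : N • m.degree h ∈ (S : Set (σ →₀ ℕ)) + W := by
    rw [← m.degree_pow]
    exact hpow N (m.degree_mem_support (pow_ne_zero N h0))
  obtain ⟨s, hs, hinf⟩ := exists_infinite_setOf_nsmul_add_mem hW hnsmul
  exact hS (mem_monomialSubalgebra.mp hb (m.degree_mem_support hb0)) hsum hs hinf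

theorem mem_monomialSubalgebra_of_isIntegral {S : AddSubmonoid (σ →₀ ℕ)}
    (hS : IsNormalExponents (S : Set (σ →₀ ℕ))) {b h : MvPolynomial σ R}
    (hb : b ∈ monomialSubalgebra R S) (hb0 : b ≠ 0) (hhb : h * b ∈ monomialSubalgebra R S)
    (hh : IsIntegral (monomialSubalgebra R S) h) : h ∈ monomialSubalgebra R S := by
  obtain ⟨m⟩ := MonomialOrder.nonempty σ
  induction hd : m.toSyn (m.degree h) using WellFoundedLT.induction generalizing h with
  | _ d ih =>
  by_cases hdeg : m.degree h = 0
  · rw [m.eq_C_of_degree_eq_zero hdeg]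
    exact Subalgebra.algebraMap_mem _ _
  have hlead : monomial (m.degree h) (m.leadingCoeff h) ∈ monomialSubalgebra R S :=
    monomial_mem_monomialSubalgebra
      (degree_mem_of_isIntegral m hS hb hb0 hhb hh (m.ne_zero_of_degree_ne_zero hdeg)) _
  have htail : m.subLTerm h ∈ monomialSubalgebra R S := by
    refine ih _ (hd ▸ m.degree_sub_LTerm_lt hdeg) ?_ ?_ rfl
    · rw [MonomialOrder.subLTerm, sub_mul]
      exact Subalgebra.sub_mem _ hhb (Subalgebra.mul_mem _ hlead hb)
    · exact hh.sub (isIntegral_algebraMap (x := (⟨_, hlead⟩ : monomialSubalgebra R S)))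
  simpa [MonomialOrder.subLTerm] using Subalgebra.add_mem _ htail hlead

theorem isIntegrallyClosed_monomialSubalgebra [UniqueFactorizationMonoid R]
    {S : AddSubmonoid (σ →₀ ℕ)} (hS : IsNormalExponents (S : Set (σ →₀ ℕ))) :
    IsIntegrallyClosed (monomialSubalgebra R S) :=
  (monomialSubalgebra R S).isIntegrallyClosed_of_forall_isIntegral_mem fun _ _ hb hb0 hxb hx =>
    mem_monomialSubalgebra_of_isIntegral hS hb hb0 hxb hx

end CommRing

end MvPolynomial

namespace Finsupp

variable {n : ℕ}

def prefixSum (j : ℕ) : (Fin n →₀ ℕ) →+ ℕ where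
  toFun u := ∑ i : Fin n with i.val < j, u i
  map_zero' := by simp
  map_add' u v := by simp [Finset.sum_add_distrib]

theorem prefixSum_apply (j : ℕ) (u : Fin n →₀ ℕ) :
    prefixSum j u = ∑ i : Fin n with i.val < j, u i :=
  rfl

@[simp]
theorem prefixSum_zero_left (u : Fin n →₀ ℕ) : prefixSum 0 u = 0 := by
  simp [prefixSum_apply]

theorem prefixSum_succ (i : Fin n) (u : Fin n →₀ ℕ) :
    prefixSum (i + 1) u = prefixSum i u + u i := by
  have : (Finset.univ.filter fun k : Fin n => k.val < i + 1) =
      insert i (Finset.univ.filter fun k : Fin n => k.val < i) := by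
    ext k
    simp only [Finset.mem_filter, Finset.mem_univ, true_and, Finset.mem_insert, Fin.ext_iff]
    omega
  rw [prefixSum_apply, this, Finset.sum_insert (by simp), add_comm]
  rfl

theorem prefixSum_of_le {j : ℕ} (h : n ≤ j) (u : Fin n →₀ ℕ) :
    prefixSum j u = prefixSum n u := by
  simp only [prefixSum_apply]
  congr 1
  ext i
  simp [i.isLt.trans_le h]

theorem prefixSum_mono {j k : ℕ} (h : j ≤ k) (u : Fin n →₀ ℕ) :
    prefixSum j u ≤ prefixSum k u := by
  simp only [prefixSum_apply]
  exact Finset.sum_le_sum_of_subset fun i => by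
    simp only [Finset.mem_filter, Finset.mem_univ, true_and]
    omega

theorem prefixSum_le_total (j : ℕ) (u : Fin n →₀ ℕ) : prefixSum j u ≤ prefixSum n u := by
  rcases le_total j n with h | h
  · exact prefixSum_mono h u
  · exact (prefixSum_of_le h u).le

theorem prefixSum_single (j : ℕ) (i : Fin n) :
    prefixSum j (single i 1) = if i.val < j then 1 else 0 := by
  simp [prefixSum_apply, single_apply]

theorem ext_prefixSum {u v : Fin n →₀ ℕ} (h : ∀ j, prefixSum j u = prefixSum j v) : u = v := by
  ext i
  have := h (i + 1)
  rw [prefixSum_succ, prefixSum_succ, h i] at this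
  omega

theorem exists_le_prefixSum_eq (u : Fin n →₀ ℕ) (F : ℕ → ℕ) (hF0 : F 0 = 0)
    (hF : ∀ a b, F a ≤ F (a + b) ∧ F (a + b) ≤ F a + b) :
    ∃ w ≤ u, ∀ j, prefixSum j w = F (prefixSum j u) := by
  set w : Fin n →₀ ℕ :=
    equivFunOnFinite.symm fun i => F (prefixSum (i + 1) u) - F (prefixSum i u)
  have hw (j : ℕ) (hj : j ≤ n) : prefixSum j w = F (prefixSum j u) := by
    induction j with
    | zero => simp [hF0]
    | succ j ih =>
      have hu : prefixSum (j + 1) u = prefixSum j u + u ⟨j, hj⟩ := prefixSum_succ ⟨j, hj⟩ u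
      have hw : prefixSum (j + 1) w = prefixSum j w + w ⟨j, hj⟩ := prefixSum_succ ⟨j, hj⟩ w
      have := (hF (prefixSum j u) (u ⟨j, hj⟩)).1
      rw [hw, ih (by omega), hu]
      simp only [w, coe_equivFunOnFinite_symm, prefixSum_succ]
      omega
  refine ⟨w, fun i => ?_, fun j => ?_⟩
  · have := (hF (prefixSum i u) (u i)).2
    simp only [w, coe_equivFunOnFinite_symm, prefixSum_succ]
    omega
  · rcases le_total j n with hj | hj
    · exact hw j hj
    · rw [prefixSum_of_le hj, prefixSum_of_le hj, hw n le_rfl]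

end Finsupp

section Borel

open Finsupp

variable {n : ℕ}

theorem prefixSum_add_ite_of_add_single_eq {m m' : Fin n →₀ ℕ} {i j : Fin n}
    (h : m' + single j 1 = m + single i 1) (t : ℕ) :
    prefixSum t m' + (if j.val < t then 1 else 0) =
      prefixSum t m + if i.val < t then 1 else 0 := by
  simpa [prefixSum_single] using congrArg (prefixSum t) h

theorem BorelStep.prefixSum_le {m m' : Fin n →₀ ℕ} (h : BorelStep n m m') (t : ℕ) :
    prefixSum t m ≤ prefixSum t m' := by
  obtain ⟨i, j, hij, -, h⟩ := h
  have := prefixSum_add_ite_of_add_single_eq h t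
  have : i.val < j.val := hij
  split_ifs at * <;> omega

theorem BorelStep.prefixSum_total {m m' : Fin n →₀ ℕ} (h : BorelStep n m m') :
    prefixSum n m' = prefixSum n m := by
  obtain ⟨i, j, -, -, h⟩ := h
  simpa [i.isLt, j.isLt] using prefixSum_add_ite_of_add_single_eq h n

theorem prefixSum_of_mem_borelSet {M m : Fin n →₀ ℕ} (hm : m ∈ BorelSet n M) :
    prefixSum n m = prefixSum n M ∧ ∀ j, prefixSum j M ≤ prefixSum j m := by
  induction hm with
  | refl => exact ⟨rfl, fun _ => le_rfl⟩
  | tail _ hstep ih =>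
    exact ⟨hstep.prefixSum_total.trans ih.1, fun j => (ih.2 j).trans (hstep.prefixSum_le j)⟩

/-- Taking `q` maximal with `ψ_q M < ψ_q m` forces `M q > 0`, so `x_q ↦ x_{q-1}` is a Borel move. -/
theorem exists_borelStep_toward {M m : Fin n →₀ ℕ} (htot : prefixSum n m = prefixSum n M)
    {a : ℕ} (ha : prefixSum a M < prefixSum a m) :
    ∃ M', BorelStep n M M' ∧ ∃ q < n, prefixSum q M < prefixSum q m ∧
      ∀ t, prefixSum t M' = prefixSum t M + if t = q then 1 else 0 := by
  classical
  have han : a ≤ n := by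
    by_contra! h
    rw [prefixSum_of_le h.le, prefixSum_of_le h.le, htot] at ha
    exact lt_irrefl _ ha
  let P (t : ℕ) : Prop := prefixSum t M < prefixSum t m
  obtain ⟨q, hq_def⟩ : ∃ q, Nat.findGreatest P n = q := ⟨_, rfl⟩
  have hq : P q := hq_def ▸ Nat.findGreatest_spec han ha
  have hqn : q < n := by
    refine (hq_def ▸ Nat.findGreatest_le n).lt_of_ne ?_
    rintro rfl
    simp [P, htot] at hq
  have hq0 : q ≠ 0 := by
    rintro rfl
    simp [P] at hq
  have hnext : ¬P (q + 1) := Nat.findGreatest_is_greatest (by rw [hq_def]; omega) hqn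
  let i : Fin n := ⟨q - 1, by omega⟩
  let j : Fin n := ⟨q, hqn⟩
  have hMj : 0 < M j := by
    have h1 : prefixSum (q + 1) M = prefixSum q M + M j := prefixSum_succ j M
    have h2 : prefixSum (q + 1) m = prefixSum q m + m j := prefixSum_succ j m
    omega
  have hle : single j 1 ≤ M + single i 1 := by
    rw [single_le_iff, Finsupp.add_apply]
    omega
  have hstep := tsub_add_cancel_of_le hle
  refine ⟨_, ⟨i, j, Fin.mk_lt_mk.mpr (by omega), hMj, hstep⟩, q, hqn, hq, fun t => ?_⟩
  have := prefixSum_add_ite_of_add_single_eq hstep t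
  rw [show i.val = q - 1 from rfl, show j.val = q from rfl] at this
  split_ifs at this ⊢ <;> omega

theorem mem_borelSet_of_prefixSum {M m : Fin n →₀ ℕ} (htot : prefixSum n m = prefixSum n M)
    (hdom : ∀ j, prefixSum j M ≤ prefixSum j m) : m ∈ BorelSet n M := by
  induction hD : ∑ t ∈ Finset.range n, (prefixSum t m - prefixSum t M)
    using Nat.strong_induction_on generalizing M with
  | _ D ih =>
  by_cases heq : ∀ j, prefixSum j M = prefixSum j m
  · rw [ext_prefixSum heq]
    exact .refl
  obtain ⟨a, ha⟩ := not_forall.mp heq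
  obtain ⟨M', hstep, q, hqn, hq, hM'⟩ := exists_borelStep_toward htot ((hdom a).lt_of_ne ha)
  have hdom' (t : ℕ) : prefixSum t M' ≤ prefixSum t m := by
    rw [hM']
    split_ifs with h
    · subst h
      omega
    · simpa using hdom t
  refine .head hstep (ih _ ?_ (by rw [hM' n, if_neg hqn.ne', add_zero, htot]) hdom' rfl)
  rw [← hD]
  refine Finset.sum_lt_sum (fun t _ => ?_) ⟨q, Finset.mem_range.mpr hqn, ?_⟩
  · rw [hM']
    split_ifs <;> omega
  · rw [hM', if_pos rfl]
    omega

theorem mem_borelSet_iff {M m : Fin n →₀ ℕ} :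
    m ∈ BorelSet n M ↔ prefixSum n m = prefixSum n M ∧ ∀ j, prefixSum j M ≤ prefixSum j m :=
  ⟨prefixSum_of_mem_borelSet, fun h => mem_borelSet_of_prefixSum h.1 h.2⟩

theorem exists_mem_borelSet_le {M u : Fin n →₀ ℕ} {k : ℕ}
    (hu : ∀ j, (k + 1) * prefixSum j M ≤ prefixSum j u) :
    ∃ m ∈ BorelSet n M, m ≤ u ∧ ∀ j, k * prefixSum j M ≤ prefixSum j (u - m) := by
  have hdiv (a b : ℕ) : (a + b) / (k + 1) ≤ a / (k + 1) + b :=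
    (Nat.div_le_div_right (by nlinarith)).trans (Nat.add_mul_div_left a b k.succ_pos).le
  obtain ⟨m, hmu, hm⟩ := exists_le_prefixSum_eq u (fun a => min (a / (k + 1)) (prefixSum n M))
    (by simp) fun a b => ⟨min_le_min_right _ (Nat.div_le_div_right (by omega)),
      by have := hdiv a b; omega⟩
  have hM (j : ℕ) : prefixSum j M ≤ prefixSum j u / (k + 1) :=
    (Nat.le_div_iff_mul_le k.succ_pos).mpr (by linarith [hu j])
  refine ⟨m, mem_borelSet_of_prefixSum ?_ fun j => ?_, hmu, fun j => ?_⟩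
  · rw [hm, min_eq_right (hM n)]
  · rw [hm]
    exact le_min (hM j) (prefixSum_le_total j M)
  · -- `a / (k + 1) ≤ a - k * c` whenever `(k + 1) * c ≤ a`
    obtain ⟨r, hr⟩ := Nat.exists_eq_add_of_le (hu j)
    have hquot : prefixSum j u / (k + 1) = r / (k + 1) + prefixSum j M := by
      rw [hr, add_comm, Nat.add_mul_div_left _ _ k.succ_pos]
    have hsub : prefixSum j (u - m) + prefixSum j m = prefixSum j u := by
      rw [← map_add, tsub_add_cancel_of_le hmu]
    have hmj : prefixSum j m ≤ prefixSum j u / (k + 1) := by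
      rw [hm]
      exact min_le_left _ _
    have := Nat.div_le_self r (k + 1)
    nlinarith

theorem mem_closure_borelSet_of_prefixSum {M : Fin n →₀ ℕ} :
    ∀ (k : ℕ) {u : Fin n →₀ ℕ}, prefixSum n u = k * prefixSum n M →
      (∀ j, k * prefixSum j M ≤ prefixSum j u) → u ∈ AddSubmonoid.closure (BorelSet n M)
  | 0, u, htot, _ => by
    rw [ext_prefixSum (u := u) (v := 0) fun j => by
      simpa [htot] using prefixSum_le_total j u]
    exact zero_mem _
  | k + 1, u, htot, hdom => by
    obtain ⟨m, hm, hmu, hdom'⟩ := exists_mem_borelSet_le hdom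
    have hsub : prefixSum n (u - m) + prefixSum n m = prefixSum n u := by
      rw [← map_add, tsub_add_cancel_of_le hmu]
    have hrest := mem_closure_borelSet_of_prefixSum k
      (by rw [(mem_borelSet_iff.mp hm).1] at hsub; rw [add_mul, one_mul] at htot; omega) hdom'
    rw [← tsub_add_cancel_of_le hmu]
    exact add_mem hrest (AddSubmonoid.subset_closure hm)

theorem coe_closure_borelSet (M : Fin n →₀ ℕ) :
    (AddSubmonoid.closure (BorelSet n M) : Set (Fin n →₀ ℕ)) =
      {u | prefixSum n M ∣ prefixSum n u} ∩
        {u | ∀ j, prefixSum j M * prefixSum n u ≤ prefixSum n M * prefixSum j u} := by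
  ext u
  refine ⟨fun hu => ?_, fun ⟨⟨k, hk⟩, hle⟩ => ?_⟩
  · induction hu using AddSubmonoid.closure_induction with
    | mem m hm =>
      obtain ⟨htot, hdom⟩ := mem_borelSet_iff.mp hm
      refine ⟨htot ▸ dvd_rfl, fun j => ?_⟩
      rw [htot, mul_comm]
      exact Nat.mul_le_mul_left _ (hdom j)
    | zero => simp
    | add u v _ _ hu hv =>
      refine ⟨?_, fun j => ?_⟩
      · simpa only [Set.mem_ofPred_eq, map_add] using dvd_add hu.1 hv.1
      simp only [map_add, mul_add]
      exact add_le_add (hu.2 j) (hv.2 j)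
  · refine mem_closure_borelSet_of_prefixSum k (by rw [hk, mul_comm]) fun j => ?_
    rcases Nat.eq_zero_or_pos (prefixSum n M) with h0 | hpos
    · simp [Nat.eq_zero_of_le_zero (h0 ▸ prefixSum_le_total j M)]
    · refine Nat.le_of_mul_le_mul_left ?_ hpos
      calc prefixSum n M * (k * prefixSum j M) = prefixSum j M * prefixSum n u := by
            rw [hk]; ring
        _ ≤ prefixSum n M * prefixSum j u := hle j

def reesExponents (M : Fin n →₀ ℕ) : Set (Fin n ⊕ Unit →₀ ℕ) :=
  Set.range (fun i => single (Sum.inl i) 1) ∪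
    (fun m => m.mapDomain Sum.inl + single (Sum.inr ()) 1) '' BorelSet n M

theorem Finsupp.mapDomain_mem_closure_range_single {α β : Type*} (f : α → β) (u : α →₀ ℕ) :
    u.mapDomain f ∈ AddSubmonoid.closure (Set.range fun a => single (f a) 1) :=
  AddSubmonoid.sum_mem _ fun a _ => by
    show single (f a) (u a) ∈ _
    rw [← smul_single_one]
    exact AddSubmonoid.nsmul_mem _ (AddSubmonoid.subset_closure (Set.mem_range_self a)) _

theorem mapDomain_inl_add_single_mem_closure_reesExponents {M : Fin n →₀ ℕ} :
    ∀ (k : ℕ) {u : Fin n →₀ ℕ}, (∀ j, k * prefixSum j M ≤ prefixSum j u) →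
      u.mapDomain Sum.inl + single (Sum.inr ()) k ∈ AddSubmonoid.closure (reesExponents M)
  | 0, u, _ => by
    rw [single_zero, add_zero]
    exact AddSubmonoid.closure_mono Set.subset_union_left
      (mapDomain_mem_closure_range_single Sum.inl u)
  | k + 1, u, hdom => by
    obtain ⟨m, hm, hmu, hdom'⟩ := exists_mem_borelSet_le hdom
    have hsplit : u.mapDomain Sum.inl + single (Sum.inr ()) (k + 1) =
        ((u - m).mapDomain Sum.inl + single (Sum.inr ()) k) +
          (m.mapDomain Sum.inl + single (Sum.inr ()) 1) := by
      rw [add_add_add_comm, ← mapDomain_add, tsub_add_cancel_of_le hmu, ← single_add]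
    rw [hsplit]
    exact add_mem (mapDomain_inl_add_single_mem_closure_reesExponents k hdom')
      (AddSubmonoid.subset_closure (.inr ⟨m, hm, rfl⟩))

theorem coe_closure_reesExponents (M : Fin n →₀ ℕ) :
    (AddSubmonoid.closure (reesExponents M) : Set (Fin n ⊕ Unit →₀ ℕ)) =
      {μ | ∀ j, prefixSum j M * μ (Sum.inr ()) ≤
        prefixSum j (μ.comapDomain Sum.inl Sum.inl_injective.injOn)} := by
  ext μ
  refine ⟨fun hμ => ?_, fun hμ => ?_⟩
  · induction hμ using AddSubmonoid.closure_induction with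
    | mem μ hμ =>
      rcases hμ with ⟨i, rfl⟩ | ⟨m, hm, rfl⟩
      · intro j
        simp
      · intro j
        simpa [comapDomain_add_of_injective Sum.inl_injective,
          comapDomain_mapDomain _ Sum.inl_injective, mapDomain_of_notMem_range]
          using (mem_borelSet_iff.mp hm).2 j
    | zero => simp
    | add μ ν _ _ hμ hν =>
      intro j
      simp only [Finsupp.add_apply, mul_add, comapDomain_add_of_injective Sum.inl_injective,
        map_add]
      exact add_le_add (hμ j) (hν j)
  · have hdecomp : μ = (μ.comapDomain Sum.inl Sum.inl_injective.injOn).mapDomain Sum.inl +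
        single (Sum.inr ()) (μ (Sum.inr ())) := by
      ext (i | _) <;> simp [mapDomain_apply Sum.inl_injective, mapDomain_of_notMem_range]
    rw [hdecomp]
    exact mapDomain_inl_add_single_mem_closure_reesExponents _ fun j => by
      rw [mul_comm]; exact hμ j

theorem isNormalExponents_closure_borelSet (M : Fin n →₀ ℕ) :
    IsNormalExponents (AddSubmonoid.closure (BorelSet n M) : Set (Fin n →₀ ℕ)) := by
  rw [coe_closure_borelSet]
  exact (isNormalExponents_setOf_dvd _ (prefixSum n)).inter
    (isNormalExponents_setOf_forall_le (fun j => prefixSum j M • prefixSum n)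
      (fun j => prefixSum n M • prefixSum j))

theorem isNormalExponents_closure_reesExponents (M : Fin n →₀ ℕ) :
    IsNormalExponents (AddSubmonoid.closure (reesExponents M) : Set (Fin n ⊕ Unit →₀ ℕ)) := by
  rw [coe_closure_reesExponents]
  exact isNormalExponents_setOf_forall_le
    (fun j => prefixSum j M • applyAddHom (Sum.inr ()))
    (fun j => (prefixSum j).comp (comapDomain.addMonoidHom Sum.inl_injective))

end Borel

/-- Corollary 4.10 (De Negri), normality part: for a principal Borel ideal
`I = ⟨Borel(M)⟩`, the toric ring `K[I]` (the `K`-subalgebra of `K[x_1,…,x_n]` generated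
by the monomials of `Borel(M)`) and the Rees algebra `R[It]` (the `K`-subalgebra of
`K[x_1,…,x_n,t]` generated by `x_1,…,x_n` and all `m·t`, `m ∈ Borel(M)`) are normal
domains: integral domains integrally closed in their fields of fractions. -/
theorem principal_borel_toric_and_rees_normal
    (K : Type*) [Field K] {n : ℕ} (M : Fin n →₀ ℕ) :
    (IsDomain (Algebra.adjoin K
        {p : MvPolynomial (Fin n) K | ∃ m ∈ BorelSet n M,
          p = MvPolynomial.monomial m (1 : K)}) ∧
      IsIntegrallyClosed (Algebra.adjoin K
        {p : MvPolynomial (Fin n) K | ∃ m ∈ BorelSet n M,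
          p = MvPolynomial.monomial m (1 : K)})) ∧
    (IsDomain (Algebra.adjoin K
        ((Set.range fun i : Fin n => (MvPolynomial.X (Sum.inl i) :
            MvPolynomial (Fin n ⊕ Unit) K)) ∪
          {p : MvPolynomial (Fin n ⊕ Unit) K | ∃ m ∈ BorelSet n M,
            p = MvPolynomial.monomial
              (Finsupp.mapDomain Sum.inl m + Finsupp.single (Sum.inr ()) 1) (1 : K)})) ∧
      IsIntegrallyClosed (Algebra.adjoin K
        ((Set.range fun i : Fin n => (MvPolynomial.X (Sum.inl i) :
            MvPolynomial (Fin n ⊕ Unit) K)) ∪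
          {p : MvPolynomial (Fin n ⊕ Unit) K | ∃ m ∈ BorelSet n M,
            p = MvPolynomial.monomial
              (Finsupp.mapDomain Sum.inl m + Finsupp.single (Sum.inr ()) 1) (1 : K)}))) := by
  have toric : {p : MvPolynomial (Fin n) K | ∃ m ∈ BorelSet n M, p = monomial m 1} =
      (monomial · 1) '' BorelSet n M := by
    ext
    simp [eq_comm]
  have rees : (Set.range fun i : Fin n => (X (Sum.inl i) : MvPolynomial (Fin n ⊕ Unit) K)) ∪
      {p | ∃ m ∈ BorelSet n M,
        p = monomial (m.mapDomain Sum.inl + Finsupp.single (Sum.inr ()) 1) (1 : K)} =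
      (monomial · 1) '' reesExponents M := by
    ext
    simp [reesExponents, Set.image_union, X, eq_comm]
  rw [toric, rees, adjoin_monomial_image_eq, adjoin_monomial_image_eq]
  exact ⟨⟨inferInstance, isIntegrallyClosed_monomialSubalgebra
      (isNormalExponents_closure_borelSet M)⟩,
    ⟨inferInstance, isIntegrallyClosed_monomialSubalgebra
      (isNormalExponents_closure_reesExponents M)⟩⟩
end

section
/- Let M be a nonconstant monomial in K[x_1,…,x_n] and I the principal Borel ideal generated by Borel(M), whose minimal generating set is Borel(M). Then the set of essential variables of I is either empty or equal to {x_1,…,x_k} for some 2 ≤ k ≤ n. -/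
/-- The set of essential variables of the principal Borel ideal `⟨Borel(M)⟩`:
variables dividing at least one minimal generator and not appearing with the same
exponent in every minimal generator (the minimal generating set is `Borel(M)`). -/
def essVars (n : ℕ) (M : Fin n →₀ ℕ) : Set (Fin n) :=
  {i | (∃ m ∈ BorelSet n M, 0 < m i) ∧
    ∃ m ∈ BorelSet n M, ∃ m' ∈ BorelSet n M, m i ≠ m' i}

/-- Variables above the largest variable of `M` stay zero under Borel moves. -/
lemma borel_bound {n : ℕ} {M : Fin n →₀ ℕ} {k : Fin n}
    (hk : ∀ s, k < s → M s = 0) :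
    ∀ m ∈ BorelSet n M, ∀ s, k < s → m s = 0 := by
  intro m hm
  induction hm with
  | refl => exact hk
  | tail hb step ih =>
    obtain ⟨i, j, hij, hj, heq⟩ := step
    intro s hs
    have hjk : j ≤ k := by
      by_contra h'
      push_neg at h'
      rw [ih j h'] at hj
      exact absurd hj (by omega)
    have hjs : j ≠ s := ne_of_lt (lt_of_le_of_lt hjk hs)
    have his : i ≠ s := ne_of_lt (lt_of_lt_of_le (lt_of_lt_of_le hij hjk) (le_of_lt hs))
    have h2 := congrArg (fun f : Fin n →₀ ℕ => f s) heq
    simp only [Finsupp.add_apply, Finsupp.single_apply, if_neg hjs, if_neg his] at h2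
    rw [ih s hs] at h2
    omega

/-- For a nonconstant monomial `M`, the set of essential variables of the principal
Borel ideal `⟨Borel(M)⟩` is either empty or of the form `{x_1,…,x_k}` with `2 ≤ k ≤ n`
(in 0-based indexing: `{i | i ≤ k}` for some index `k` with `k.val ≥ 1`). -/
theorem essVars_principal_borel {n : ℕ} (M : Fin n →₀ ℕ) (hM : M ≠ 0) :
    essVars n M = ∅ ∨
      ∃ k : Fin n, 0 < k.val ∧ essVars n M = {i : Fin n | i ≤ k} := by
  by_cases hc : ∀ j : Fin n, 0 < j.val → M j = 0
  · -- only variable x_0 can occur : Borel set is {M}, essVars is empty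
    left
    have huniq : ∀ m ∈ BorelSet n M, m = M := by
      intro m hm
      induction hm with
      | refl => rfl
      | tail hb step ih =>
        obtain ⟨i, j, hij, hj, heq⟩ := step
        rw [ih] at hj
        have hjpos : 0 < j.val := lt_of_le_of_lt (Nat.zero_le _) hij
        rw [hc j hjpos] at hj
        exact absurd hj (by omega)
    ext i
    simp only [essVars, Set.mem_setOf_eq, Set.mem_empty_iff_false, iff_false]
    rintro ⟨-, m, hm, m', hm', hne⟩
    rw [huniq m hm, huniq m' hm'] at hne
    exact hne rfl
  · right
    push_neg at hc
    obtain ⟨j, hj1, hj2⟩ := hc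
    have hS : M.support.Nonempty := ⟨j, Finsupp.mem_support_iff.mpr hj2⟩
    set k := M.support.max' hS with hkdef
    have hk_mem : k ∈ M.support := M.support.max'_mem hS
    have hMk : 0 < M k := Nat.pos_of_ne_zero (Finsupp.mem_support_iff.mp hk_mem)
    have hjk : j ≤ k := M.support.le_max' j (Finsupp.mem_support_iff.mpr hj2)
    have hkpos : 0 < k.val := lt_of_lt_of_le hj1 hjk
    have hbig : ∀ s, k < s → M s = 0 := by
      intro s hs
      by_contra h'
      exact absurd (M.support.le_max' s (Finsupp.mem_support_iff.mpr h')) (not_le.mpr hs)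
    -- single-step generators: move one unit from k down to i'
    have key : ∀ i' : Fin n, i' < k →
        (M + Finsupp.single i' 1 - Finsupp.single k 1) ∈ BorelSet n M := by
      intro i' hi'
      refine Relation.ReflTransGen.single ⟨i', k, hi', hMk, ?_⟩
      ext t
      simp only [Finsupp.add_apply, Finsupp.tsub_apply, Finsupp.single_apply]
      rcases eq_or_ne k t with rfl | hkt
      · rw [if_neg (ne_of_lt hi')]
        simp
        omega
      · rw [if_neg hkt]
        omega
    have keyval : ∀ i' : Fin n, i' < k →
        ((M + Finsupp.single i' 1 - Finsupp.single k 1 : Fin n →₀ ℕ)) i' = M i' + 1 := by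
      intro i' hi'
      simp only [Finsupp.tsub_apply, Finsupp.add_apply, Finsupp.single_apply]
      simp only [if_true, if_neg (ne_of_gt hi')]; omega
    refine ⟨k, hkpos, ?_⟩
    ext i
    simp only [essVars, Set.mem_setOf_eq]
    constructor
    · rintro ⟨-, m, hm, m', hm', hne⟩
      by_contra hik
      push_neg at hik
      rw [borel_bound hbig m hm i hik, borel_bound hbig m' hm' i hik] at hne
      exact hne rfl
    · intro hik
      rcases eq_or_lt_of_le hik with heq | hlt
      · -- i = k : use M and the monomial obtained by moving one unit from k to 0
        subst heq
        have hn0 : (0 : ℕ) < n := k.pos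
        have h0i : (⟨0, hn0⟩ : Fin n) < k := by
          rw [Fin.lt_def]; exact hkpos
        refine ⟨⟨M, Relation.ReflTransGen.refl, hMk⟩,
          M, Relation.ReflTransGen.refl,
          M + Finsupp.single ⟨0, hn0⟩ 1 - Finsupp.single k 1, key _ h0i, ?_⟩
        simp only [Finsupp.tsub_apply, Finsupp.add_apply, Finsupp.single_apply]
        simp only [if_true, if_neg (ne_of_lt h0i)]
        omega
      · -- i < k
        refine ⟨⟨M + Finsupp.single i 1 - Finsupp.single k 1, key i hlt, ?_⟩,
          M, Relation.ReflTransGen.refl,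
          M + Finsupp.single i 1 - Finsupp.single k 1, key i hlt, ?_⟩
        · rw [keyval i hlt]; omega
        · rw [keyval i hlt]; omega
end

section
/- Let I_1,…,I_r be principal Borel ideals in K[x_1,…,x_n] with essential variable sets E_1,…,E_r, indexed so that |E_1| ≥ |E_2| ≥ ⋯ ≥ |E_r|. Then this ordering is L-free: for all indices 1 ≤ h < j ≤ n and 1 ≤ u < v ≤ r, if x_h ∈ E_u, x_j ∈ E_u and x_j ∈ E_v, then x_h ∈ E_v. In particular, every collection of principal Borel ideals admits an L-free ordering. -/
/-- Essential variable sets of principal Borel ideals are downward closed. -/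
lemma essVars_downward_closed {n : ℕ} (M : Fin n →₀ ℕ) {h j : Fin n}
    (hhj : h < j) (hj : j ∈ essVars n M) : h ∈ essVars n M := by
  obtain ⟨⟨m, hm, hmj⟩, -⟩ := hj
  have hne : h ≠ j := ne_of_lt hhj
  set m'' := m + Finsupp.single h 1 - Finsupp.single j 1 with hm''def
  have hle : Finsupp.single j 1 ≤ m + Finsupp.single h 1 := by
    refine le_trans ?_ le_self_add
    rwa [Finsupp.single_le_iff]
  have hcancel : m'' + Finsupp.single j 1 = m + Finsupp.single h 1 :=
    tsub_add_cancel_of_le hle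
  have hstep : BorelStep n m m'' := ⟨h, j, hhj, hmj, hcancel⟩
  have hmem : m'' ∈ BorelSet n M := Relation.ReflTransGen.tail hm hstep
  have hval : m'' h = m h + 1 := by
    have := congrArg (fun f => f h) hcancel
    simpa [Finsupp.single_apply, hne, hne.symm] using this
  exact ⟨⟨m'', hmem, by omega⟩, m'', hmem, m, hm, by omega⟩

/-- Proposition 5.12: if principal Borel ideals `I_1,…,I_r` (with `I_u = ⟨Borel(M_u)⟩`)
are indexed so that the cardinalities of their essential variable sets decrease,
`|E_1| ≥ ⋯ ≥ |E_r|`, then the ordering is `𝖫`-free: whenever `h < j`, `u < v`,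
`x_h ∈ E_u`, `x_j ∈ E_u` and `x_j ∈ E_v`, also `x_h ∈ E_v`.  In particular every
collection of principal Borel ideals admits an `𝖫`-free ordering. -/
theorem principal_borel_L_free {n r : ℕ} (M : Fin r → (Fin n →₀ ℕ))
    (hcard : ∀ u v : Fin r, u ≤ v →
      (essVars n (M v)).ncard ≤ (essVars n (M u)).ncard) :
    ∀ (h j : Fin n) (u v : Fin r), h < j → u < v →
      h ∈ essVars n (M u) → j ∈ essVars n (M u) → j ∈ essVars n (M v) →
        h ∈ essVars n (M v) := by
  intro h j u v hhj _ _ _ hjv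
  exact essVars_downward_closed (M v) hhj hjv
end

section
/- Let E_1,…,E_r be subsets of {x_1,…,x_n} and, for each i, let M'_i and m_i be monomials in K[x_1,…,x_n] such that every variable dividing M'_i lies in E_i and no variable dividing m_i lies in E_i. Set M_i = M'_i·m_i, let I_i be the principal L_{E_i}-Borel ideal generated by M_i and I'_i the principal L_{E_i}-Borel ideal generated by M'_i. Then there is a K-algebra isomorphism between the multi-Rees algebras R[I_1t_1,…,I_rt_r] and R[I'_1t_1,…,I'_rt_r], and a K-algebra isomorphism between the multi-fiber rings K[I_1t_1,…,I_rt_r] and K[I'_1t_1,…,I'_rt_r]. -/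
/-!
The substitution `x_j ↦ x_j`, `t_i ↦ x^{m_i} t_i` comes from an injective map on exponents, so
it is an injective `K`-algebra endomorphism of `K[x, t]`. An `L_{E_i}`-Borel move only changes
exponents of variables in `E_i`, where `m_i` vanishes, so
`L_{E_i}-Borel(M'_i m_i) = m_i · L_{E_i}-Borel(M'_i)`. Hence the substitution maps the generators
`g t_i` of the algebras built from the `I'_i` onto those built from the `I_i`, and restricts to
isomorphisms of the multi-Rees algebras and of the multi-fiber rings.
-/

/-- An `L_U`-Borel move: replace one factor `x_j` of `m` by `x_i`, where
`x_i, x_j ∈ U` and `i < j`. -/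
def LBorelStep (n : ℕ) (U : Set (Fin n)) (m m' : Fin n →₀ ℕ) : Prop :=
  ∃ i j : Fin n, i ∈ U ∧ j ∈ U ∧ i < j ∧ 0 < m j ∧
    m' + Finsupp.single j 1 = m + Finsupp.single i 1

/-- `L_U`-Borel(M): all monomials obtainable from `M` by `L_U`-Borel moves
(including `M` itself); this is the minimal generating set of the principal
`L_U`-Borel ideal generated by `M`. -/
def LBorelSet (n : ℕ) (U : Set (Fin n)) (M : Fin n →₀ ℕ) : Set (Fin n →₀ ℕ) :=
  {m | Relation.ReflTransGen (LBorelStep n U) M m}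

/-- The multi-Rees algebra `R[I_1t_1,…,I_rt_r]` of monomial ideals with minimal
generating sets `G_1,…,G_r`: the `K`-subalgebra of `K[x_1,…,x_n,t_1,…,t_r]` generated
by `x_1,…,x_n` together with all `g·t_i`, `g ∈ G_i`. -/
noncomputable def multiRees (K : Type*) [Field K] (n r : ℕ) (G : Fin r → Set (Fin n →₀ ℕ)) :
    Subalgebra K (MvPolynomial (Fin n ⊕ Fin r) K) :=
  Algebra.adjoin K
    ((Set.range fun i : Fin n => (MvPolynomial.X (Sum.inl i) :
        MvPolynomial (Fin n ⊕ Fin r) K)) ∪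
      {p | ∃ i : Fin r, ∃ g ∈ G i,
        p = MvPolynomial.monomial
          (Finsupp.mapDomain Sum.inl g + Finsupp.single (Sum.inr i) 1) (1 : K)})

/-- The multi-fiber ring `K[I_1t_1,…,I_rt_r]`: the `K`-subalgebra of
`K[x_1,…,x_n,t_1,…,t_r]` generated by all `g·t_i`, `g ∈ G_i`. -/
noncomputable def multiFiber (K : Type*) [Field K] (n r : ℕ) (G : Fin r → Set (Fin n →₀ ℕ)) :
    Subalgebra K (MvPolynomial (Fin n ⊕ Fin r) K) :=
  Algebra.adjoin K
    {p | ∃ i : Fin r, ∃ g ∈ G i,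
      p = MvPolynomial.monomial
        (Finsupp.mapDomain Sum.inl g + Finsupp.single (Sum.inr i) 1) (1 : K)}

section LBorelShift

variable {n : ℕ} {U : Set (Fin n)}

lemma LBorelStep.add_right {a b : Fin n →₀ ℕ} (h : LBorelStep n U a b) (c : Fin n →₀ ℕ) :
    LBorelStep n U (a + c) (b + c) := by
  obtain ⟨i, j, hi, hj, hij, hpos, heq⟩ := h
  refine ⟨i, j, hi, hj, hij, hpos.trans_le (Nat.le_add_right _ _), ?_⟩
  rw [add_right_comm, heq, add_right_comm]

lemma LBorelStep.exists_of_add_right {a b c : Fin n →₀ ℕ} (hc : ∀ k ∈ U, c k = 0)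
    (h : LBorelStep n U (a + c) b) : ∃ b', b = b' + c ∧ LBorelStep n U a b' := by
  obtain ⟨i, j, hi, hj, hij, hpos, heq⟩ := h
  -- `c` vanishes at `j ∈ U`, so the factor `x_j` removed by the move already divides `a`.
  have hja : 0 < a j := by simpa [hc j hj] using hpos
  have hcancel : a + Finsupp.single i 1 - Finsupp.single j 1 + Finsupp.single j 1 =
      a + Finsupp.single i 1 :=
    tsub_add_cancel_of_le (Finsupp.single_le_iff.2 (hja.trans_le (Nat.le_add_right _ _)))
  refine ⟨a + Finsupp.single i 1 - Finsupp.single j 1,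
    add_right_cancel (b := Finsupp.single j 1) ?_, i, j, hi, hj, hij, hja, hcancel⟩
  rw [heq, add_right_comm _ _ (Finsupp.single j 1), hcancel, add_right_comm]

lemma LBorelSet_add_eq_image {c : Fin n →₀ ℕ} (hc : ∀ k ∈ U, c k = 0) (a : Fin n →₀ ℕ) :
    LBorelSet n U (a + c) = (· + c) '' LBorelSet n U a := by
  ext b
  constructor
  · intro hb
    induction hb with
    | refl => exact ⟨a, .refl, rfl⟩
    | tail _ hstep ih =>
      obtain ⟨b', hb', rfl⟩ := ih
      obtain ⟨b'', rfl, hstep'⟩ := hstep.exists_of_add_right hc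
      exact ⟨b'', hb'.tail hstep', rfl⟩
  · rintro ⟨b, hb, rfl⟩
    exact Relation.ReflTransGen.lift _ (fun _ _ h => h.add_right c) _ _ hb

end LBorelShift

section MonomialShift

variable {σ ι : Type*} [Fintype ι] (m : ι → σ →₀ ℕ)

/-- Exponent map of the substitution `x_j ↦ x_j`, `t_i ↦ x^{m_i} t_i`. -/
noncomputable def shiftExponent : (σ ⊕ ι →₀ ℕ) →+ (σ ⊕ ι →₀ ℕ) where
  toFun u := u + Finsupp.mapDomain Sum.inl (∑ i, u (Sum.inr i) • m i)
  map_zero' := by simp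
  map_add' u v := by
    simp only [Finsupp.add_apply, add_smul, Finset.sum_add_distrib, Finsupp.mapDomain_add]
    abel

lemma shiftExponent_apply (u : σ ⊕ ι →₀ ℕ) :
    shiftExponent m u = u + Finsupp.mapDomain Sum.inl (∑ i, u (Sum.inr i) • m i) := rfl

lemma shiftExponent_apply_inr (u : σ ⊕ ι →₀ ℕ) (i : ι) :
    shiftExponent m u (Sum.inr i) = u (Sum.inr i) := by
  simp [shiftExponent_apply, Finsupp.mapDomain_of_notMem_range]

lemma shiftExponent_injective : Function.Injective (shiftExponent m) := by
  intro u v huv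
  have hinr : ∀ i, u (Sum.inr i) = v (Sum.inr i) := fun i => by
    simpa only [shiftExponent_apply_inr] using DFunLike.congr_fun huv (Sum.inr i)
  rw [shiftExponent_apply, shiftExponent_apply] at huv
  simp only [hinr] at huv
  exact add_right_cancel huv

lemma shiftExponent_mapDomain_inl_add_single (g : σ →₀ ℕ) (i : ι) :
    shiftExponent m (Finsupp.mapDomain Sum.inl g + Finsupp.single (Sum.inr i) 1) =
      Finsupp.mapDomain Sum.inl (g + m i) + Finsupp.single (Sum.inr i) 1 := by
  classical
  simp [shiftExponent_apply, Finsupp.mapDomain_of_notMem_range, Finsupp.mapDomain_add,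
    Finsupp.single_apply_left Sum.inr_injective, Finsupp.single_apply]
  abel

variable (K : Type*) [CommSemiring K]

noncomputable def shiftHom : MvPolynomial (σ ⊕ ι) K →ₐ[K] MvPolynomial (σ ⊕ ι) K :=
  AddMonoidAlgebra.mapDomainAlgHom K K (shiftExponent m)

lemma shiftHom_monomial (u : σ ⊕ ι →₀ ℕ) (a : K) :
    shiftHom m K (MvPolynomial.monomial u a) = MvPolynomial.monomial (shiftExponent m u) a :=
  AddMonoidAlgebra.mapDomain_single

lemma shiftHom_X_inl (j : σ) :
    shiftHom m K (MvPolynomial.X (Sum.inl j)) = MvPolynomial.X (Sum.inl j) := by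
  simp [MvPolynomial.X, shiftHom_monomial, shiftExponent_apply]

lemma shiftHom_injective : Function.Injective (shiftHom m K) :=
  AddMonoidAlgebra.mapDomain_injective (shiftExponent_injective m)

end MonomialShift

section MultiRees

variable (K : Type*) [Field K] {n r : ℕ} (m : Fin r → Fin n →₀ ℕ) (G : Fin r → Set (Fin n →₀ ℕ))

lemma shiftHom_image_generators :
    shiftHom m K '' {p | ∃ i : Fin r, ∃ g ∈ G i,
        p = MvPolynomial.monomial
          (Finsupp.mapDomain Sum.inl g + Finsupp.single (Sum.inr i) 1) (1 : K)} =
      {p | ∃ i : Fin r, ∃ g ∈ (· + m i) '' G i,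
        p = MvPolynomial.monomial
          (Finsupp.mapDomain Sum.inl g + Finsupp.single (Sum.inr i) 1) (1 : K)} := by
  ext p
  simp only [Set.mem_image, Set.mem_ofPred_eq]
  constructor
  · rintro ⟨_, ⟨i, g, hg, rfl⟩, rfl⟩
    exact ⟨i, g + m i, ⟨g, hg, rfl⟩, by
      rw [shiftHom_monomial, shiftExponent_mapDomain_inl_add_single]⟩
  · rintro ⟨i, _, ⟨g, hg, rfl⟩, rfl⟩
    exact ⟨_, ⟨i, g, hg, rfl⟩, by
      rw [shiftHom_monomial, shiftExponent_mapDomain_inl_add_single]⟩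

lemma multiRees_map_shiftHom :
    (multiRees K n r G).map (shiftHom m K) = multiRees K n r fun i => (· + m i) '' G i := by
  rw [multiRees, multiRees, AlgHom.map_adjoin, Set.image_union, ← Set.range_comp,
    shiftHom_image_generators]
  congr 3
  exact funext (shiftHom_X_inl m K)

lemma multiFiber_map_shiftHom :
    (multiFiber K n r G).map (shiftHom m K) = multiFiber K n r fun i => (· + m i) '' G i := by
  rw [multiFiber, multiFiber, AlgHom.map_adjoin, shiftHom_image_generators]

lemma nonempty_multiRees_shift_algEquiv :
    Nonempty ((multiRees K n r fun i => (· + m i) '' G i) ≃ₐ[K] multiRees K n r G) :=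
  ⟨(Subalgebra.equivOfEq _ _ (multiRees_map_shiftHom K m G).symm).trans
    (Subalgebra.equivMapOfInjective _ _ (shiftHom_injective m K)).symm⟩

lemma nonempty_multiFiber_shift_algEquiv :
    Nonempty ((multiFiber K n r fun i => (· + m i) '' G i) ≃ₐ[K] multiFiber K n r G) :=
  ⟨(Subalgebra.equivOfEq _ _ (multiFiber_map_shiftHom K m G).symm).trans
    (Subalgebra.equivMapOfInjective _ _ (shiftHom_injective m K)).symm⟩

end MultiRees

theorem multiRees_strip_inessential_general
    (K : Type*) [Field K] {n r : ℕ}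
    (E : Fin r → Set (Fin n)) (M' m : Fin r → (Fin n →₀ ℕ))
    (hm : ∀ (i : Fin r) (j : Fin n), 0 < m i j → j ∉ E i) :
    Nonempty ((multiRees K n r fun i => LBorelSet n (E i) (M' i + m i)) ≃ₐ[K]
        (multiRees K n r fun i => LBorelSet n (E i) (M' i))) ∧
    Nonempty ((multiFiber K n r fun i => LBorelSet n (E i) (M' i + m i)) ≃ₐ[K]
        (multiFiber K n r fun i => LBorelSet n (E i) (M' i))) := by
  have hG : (fun i => LBorelSet n (E i) (M' i + m i)) =
      fun i => (· + m i) '' LBorelSet n (E i) (M' i) :=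
    funext fun i =>
      LBorelSet_add_eq_image (fun k hk => Nat.eq_zero_of_not_pos fun h => hm i k h hk) _
  rw [hG]
  exact ⟨nonempty_multiRees_shift_algEquiv K m _, nonempty_multiFiber_shift_algEquiv K m _⟩

/-- Proposition 6.2: let `M_i = M'_i·m_i` where every variable dividing `M'_i` lies in
`E_i` and no variable dividing `m_i` lies in `E_i`.  Then the multi-Rees algebras of the
principal `L_{E_i}`-Borel ideals generated by the `M_i` and by the `M'_i` are isomorphic
as `K`-algebras, as are the corresponding multi-fiber rings. -/
theorem multiRees_strip_inessential
    (K : Type*) [Field K] {n r : ℕ}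
    (E : Fin r → Set (Fin n)) (M' m : Fin r → (Fin n →₀ ℕ))
    (hM' : ∀ (i : Fin r) (j : Fin n), 0 < M' i j → j ∈ E i)
    (hm : ∀ (i : Fin r) (j : Fin n), 0 < m i j → j ∉ E i) :
    Nonempty ((multiRees K n r fun i => LBorelSet n (E i) (M' i + m i)) ≃ₐ[K]
        (multiRees K n r fun i => LBorelSet n (E i) (M' i))) ∧
    Nonempty ((multiFiber K n r fun i => LBorelSet n (E i) (M' i + m i)) ≃ₐ[K]
        (multiFiber K n r fun i => LBorelSet n (E i) (M' i))) :=
  multiRees_strip_inessential_general K E M' m hm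
end
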